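/- arXiv:1702.00688 — 9 statements merged into one kernel-verified Lean document; each statement's English description precedes it below -/
import Mathlib

section
/- Let w be a synaptic kernel with sup_{x∈ℝ^m} ∫_{ℝ^m} |w(x,y)| dy ≤ C_w, let f, g be an activation function and a learning modulation function, let γ ≥ 0, and let u_0 ∈ C_b(ℝ^m). If u is a solution of the initial value problem u_t(x,t) = −u(x,t) + ∫_{ℝ^m} w(x,y)[1 + γ g(u(x,t) − u(y,t))] f(u(y,t)) dy on ℝ^m × [0,∞) with u(x,0) = u_0(x), then |u(x,t)| ≤ max{‖u_0‖_∞, (1 + γ) C_w} for all (x,t) ∈ ℝ^m × [0,∞). -/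
open MeasureTheory Set

/-!
Writing the equation as `∂ₜu = -u + F` with `|F| ≤ (1 + γ) C_w` (because `0 ≤ f, g ≤ 1`), the
function `eᵗ (u - M)` has derivative `eᵗ (F - M) ≤ 0` whenever `F ≤ M`, so it is antitone and
`u ≤ M` propagates from the initial time; the lower bound is the same statement for `-u`.
-/

section RelaxationODE

variable {φ F : ℝ → ℝ} {a M : ℝ}

theorem le_of_hasDerivWithinAt_neg_add
    (hφ : ∀ t ∈ Ici a, HasDerivWithinAt φ (-φ t + F t) (Ici a) t)
    (hF : ∀ t ∈ Ici a, F t ≤ M) (ha : φ a ≤ M) :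
    ∀ t ∈ Ici a, φ t ≤ M := by
  have hcont : ContinuousOn φ (Ici a) := fun s hs => (hφ s hs).continuousWithinAt
  have hanti : AntitoneOn (fun s => Real.exp s * (φ s - M)) (Ici a) := by
    refine antitoneOn_of_hasDerivWithinAt_nonpos (convex_Ici a)
      (f' := fun s => Real.exp s * (F s - M)) ?_ ?_ ?_
    · exact Real.continuous_exp.continuousOn.mul (hcont.sub continuousOn_const)
    · rw [interior_Ici]
      intro s hs
      have hderiv : HasDerivWithinAt (fun s => Real.exp s * (φ s - M))
          (Real.exp s * (φ s - M) + Real.exp s * (-φ s + F s)) (Ioi a) s :=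
        (Real.hasDerivAt_exp s).hasDerivWithinAt.mul
          (((hφ s (Ioi_subset_Ici_self hs)).sub_const M).mono Ioi_subset_Ici_self)
      exact hderiv.congr_deriv (by ring)
    · rw [interior_Ici]
      intro s hs
      exact mul_nonpos_of_nonneg_of_nonpos (Real.exp_pos s).le
        (sub_nonpos.mpr (hF s (Ioi_subset_Ici_self hs)))
  intro t ht
  have h : Real.exp t * (φ t - M) ≤ Real.exp a * (φ a - M) := hanti self_mem_Ici ht ht
  have h_nonpos : Real.exp t * (φ t - M) ≤ 0 :=
    h.trans (mul_nonpos_of_nonneg_of_nonpos (Real.exp_pos a).le (sub_nonpos.mpr ha))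
  exact sub_nonpos.mp (nonpos_of_mul_nonpos_right h_nonpos (Real.exp_pos t))

theorem abs_le_of_hasDerivWithinAt_neg_add
    (hφ : ∀ t ∈ Ici a, HasDerivWithinAt φ (-φ t + F t) (Ici a) t)
    (hF : ∀ t ∈ Ici a, |F t| ≤ M) (ha : |φ a| ≤ M) :
    ∀ t ∈ Ici a, |φ t| ≤ M := by
  have hupper := le_of_hasDerivWithinAt_neg_add hφ (fun t ht => (abs_le.mp (hF t ht)).2)
    (abs_le.mp ha).2
  have hlower := le_of_hasDerivWithinAt_neg_add (φ := fun t => -φ t) (F := fun t => -F t)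
    (fun t ht => (hφ t ht).neg.congr_deriv (by ring))
    (fun t ht => neg_le.mp (abs_le.mp (hF t ht)).1) (neg_le.mp (abs_le.mp ha).1)
  exact fun t ht => abs_le.mpr ⟨neg_le.mp (hlower t ht), hupper t ht⟩

end RelaxationODE

theorem abs_mul_one_add_mul_mul_le {w p q γ : ℝ} (hγ : 0 ≤ γ)
    (hp : 0 ≤ p ∧ p ≤ 1) (hq : 0 ≤ q ∧ q ≤ 1) :
    |w * (1 + γ * p) * q| ≤ (1 + γ) * |w| := by
  have hγp : 0 ≤ γ * p := mul_nonneg hγ hp.1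
  rw [abs_mul, abs_mul, abs_of_nonneg (by linarith : 0 ≤ 1 + γ * p), abs_of_nonneg hq.1]
  have hfactor : (1 + γ * p) * q ≤ 1 + γ := by
    nlinarith [mul_le_of_le_one_right hγ hp.2,
      mul_le_of_le_one_right (by linarith : 0 ≤ 1 + γ * p) hq.2]
  calc |w| * (1 + γ * p) * q = |w| * ((1 + γ * p) * q) := by ring
    _ ≤ |w| * (1 + γ) := by gcongr
    _ = (1 + γ) * |w| := by ring

theorem abs_integral_le_mul_integral_abs {α : Type*} [MeasurableSpace α] {μ : Measure α}
    {h w : α → ℝ} {C : ℝ} (hw : Integrable w μ) (hle : ∀ y, |h y| ≤ C * |w y|) :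
    |∫ y, h y ∂μ| ≤ C * ∫ y, |w y| ∂μ := by
  rw [← integral_const_mul]
  exact norm_integral_le_of_norm_le (hw.abs.const_mul C)
    (.of_forall fun y => (Real.norm_eq_abs _).trans_le (hle y))

theorem stmt_1_general {m : ℕ}
    (w : (Fin m → ℝ) → (Fin m → ℝ) → ℝ)
    (Cw : ℝ)
    (hw_int : ∀ x, Integrable fun y => w x y)
    (hw_L1 : ∀ x, (∫ y, |w x y|) ≤ Cw)
    (f g : ℝ → ℝ)
    (hf_range : ∀ s, 0 ≤ f s ∧ f s ≤ 1)
    (hg_range : ∀ s, 0 ≤ g s ∧ g s ≤ 1)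
    (γ : ℝ) (hγ : 0 ≤ γ)
    (u₀ : BoundedContinuousFunction (Fin m → ℝ) ℝ)
    (u : (Fin m → ℝ) → ℝ → ℝ)
    (hu_init : ∀ x, u x 0 = u₀ x)
    (hu_sol : ∀ (x : Fin m → ℝ), ∀ t ∈ Ici (0:ℝ),
      HasDerivWithinAt (u x)
        (-(u x t) + ∫ y, w x y * (1 + γ * g (u x t - u y t)) * f (u y t))
        (Ici 0) t) :
    ∀ (x : Fin m → ℝ), ∀ t ∈ Ici (0:ℝ), |u x t| ≤ max ‖u₀‖ ((1 + γ) * Cw) := by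
  intro x
  refine abs_le_of_hasDerivWithinAt_neg_add (hu_sol x) (fun t _ => ?_) ?_
  · calc |∫ y, w x y * (1 + γ * g (u x t - u y t)) * f (u y t)|
        ≤ (1 + γ) * ∫ y, |w x y| := abs_integral_le_mul_integral_abs (hw_int x)
          fun y => abs_mul_one_add_mul_mul_le hγ (hg_range _) (hf_range _)
      _ ≤ (1 + γ) * Cw := by gcongr; exact hw_L1 x
      _ ≤ _ := le_max_right _ _
  · rw [hu_init x]
    exact (u₀.norm_coe_le_norm x).trans (le_max_left _ _)

/-- Global estimates: if `u` solves the plastic neural field IVP with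
initial datum `u₀ ∈ C_b(ℝ^m)`, then `|u(x,t)| ≤ max {‖u₀‖_∞, (1+γ) C_w}` for all
`(x,t) ∈ ℝ^m × [0,∞)`. -/
theorem stmt_1 {m : ℕ} (hm : 1 ≤ m)
    (w : (Fin m → ℝ) → (Fin m → ℝ) → ℝ)
    (Cinf Cw Kw : ℝ) (hCw : 0 < Cw) (hKw : 0 < Kw)
    (hw_meas : Measurable (Function.uncurry w))
    (hw_bdd : ∀ x y, |w x y| ≤ Cinf)
    (hw_int : ∀ x, Integrable fun y => w x y)
    (hw_L1 : ∀ x, (∫ y, |w x y|) ≤ Cw)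
    (hw_lip : ∀ x x', (∫ y, |w x y - w x' y|) ≤ Kw * ‖x - x'‖)
    (f g : ℝ → ℝ)
    (hf_smooth : ContDiff ℝ 1 f) (hf_deriv : ∃ B, ∀ s, |deriv f s| ≤ B)
    (hf_range : ∀ s, 0 ≤ f s ∧ f s ≤ 1)
    (hg_smooth : ContDiff ℝ 1 g) (hg_deriv : ∃ B, ∀ s, |deriv g s| ≤ B)
    (hg_range : ∀ s, 0 ≤ g s ∧ g s ≤ 1)
    (γ : ℝ) (hγ : 0 ≤ γ)
    (u₀ : BoundedContinuousFunction (Fin m → ℝ) ℝ)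
    (u : (Fin m → ℝ) → ℝ → ℝ)
    (hu_meas : Measurable (Function.uncurry u))
    (hu_init : ∀ x, u x 0 = u₀ x)
    (hu_sol : ∀ (x : Fin m → ℝ), ∀ t ∈ Ici (0:ℝ),
      HasDerivWithinAt (u x)
        (-(u x t) + ∫ y, w x y * (1 + γ * g (u x t - u y t)) * f (u y t))
        (Ici 0) t) :
    ∀ (x : Fin m → ℝ), ∀ t ∈ Ici (0:ℝ), |u x t| ≤ max ‖u₀‖ ((1 + γ) * Cw) :=
  stmt_1_general w Cw hw_int hw_L1 f g hf_range hg_range γ hγ u₀ u hu_init hu_sol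
end

section
/- Let w be a synaptic kernel, f and g an activation function and a learning modulation function, γ ≥ 0, and ρ > 0. Then the operator A defined by (Au)(x,t) = ∫_0^t [ −u(x,s) + ∫_{ℝ^m} w(x,y)(1 + γ g(u(x,s) − u(y,s))) f(u(y,s)) dy ] ds maps the Banach space X_ρ = C_b(ℝ^m × [0,ρ]) of bounded continuous functions on ℝ^m × [0,ρ] into itself; in particular, for every u ∈ X_ρ and fixed x, the map t ↦ (Au)(x,t) is continuous on [0,ρ]. -/
/-!
The integrand `s ↦ -u(x,s) + ∫ w(x,y) (1 + γ g(u(x,s) - u(y,s))) f(u(y,s)) dy` is bounded by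
`sup |u| + (1 + |γ|) C_w`, which bounds `A u` by a multiple of `ρ`. It is also jointly continuous
in `(x, s)`: the factor `(1 + γ g) f` is bounded and continuous, so dominated convergence handles
the motion of `u`, while the `L¹`-Lipschitz condition on `w` handles the motion of the kernel.
A primitive of a jointly continuous integrand is jointly continuous.
-/

open MeasureTheory Set

/-- The operator `A`, `(Au)(x,t) = ∫₀ᵗ [-u(x,s) + ∫ w x y (1 + γ g(u x s - u y s)) f(u y s) dy] ds`. -/
noncomputable def Aop {m : ℕ} (w : (Fin m → ℝ) → (Fin m → ℝ) → ℝ) (f g : ℝ → ℝ)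
    (γ : ℝ) (u : (Fin m → ℝ) → ℝ → ℝ) (x : Fin m → ℝ) (t : ℝ) : ℝ :=
  ∫ s in (0:ℝ)..t, (-(u x s) + ∫ y, w x y * (1 + γ * g (u x s - u y s)) * f (u y s))

open Filter Topology

section KernelIntegral

variable {X P Y : Type*} [SeminormedAddCommGroup X] [TopologicalSpace P]
  [FirstCountableTopology P] [MeasurableSpace Y] {μ : Measure Y}

theorem abs_integral_mul_le_of_abs_le {w h : Y → ℝ} {B : ℝ} (hw : Integrable w μ)
    (hh : ∀ y, |h y| ≤ B) : |∫ y, w y * h y ∂μ| ≤ B * ∫ y, |w y| ∂μ := by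
  rw [← integral_const_mul B fun y => |w y|, ← Real.norm_eq_abs]
  refine norm_integral_le_of_norm_le (hw.abs.const_mul B) (ae_of_all _ fun y => ?_)
  rw [Real.norm_eq_abs, abs_mul, mul_comm B]
  exact mul_le_mul_of_nonneg_left (hh y) (abs_nonneg _)

theorem continuous_integral_kernel_mul {w : X → Y → ℝ} {h : P → Y → ℝ} {π : P → X} {K B : ℝ}
    (hπ : Continuous π) (hw_int : ∀ x, Integrable (w x) μ)
    (hw_lip : ∀ x x', ∫ y, |w x y - w x' y| ∂μ ≤ K * ‖x - x'‖)
    (hh_meas : ∀ p, AEStronglyMeasurable (h p) μ) (hh_bdd : ∀ p y, |h p y| ≤ B)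
    (hh_cont : ∀ y, Continuous fun p => h p y) :
    Continuous fun p => ∫ y, w (π p) y * h p y ∂μ := by
  have hint : ∀ v : Y → ℝ, Integrable v μ → ∀ p, Integrable (fun y => v y * h p y) μ :=
    fun v hv p => hv.mul_bdd (hh_meas p) (ae_of_all _ fun y => hh_bdd p y)
  rw [continuous_iff_continuousAt]
  intro p₀
  -- Freeze the kernel at `π p₀`: that part converges by dominated convergence, and the kernel
  -- increment is `O(‖π p - π p₀‖)` in `L¹` against the bounded factor `h p`.
  have hsplit : (fun p => ∫ y, w (π p) y * h p y ∂μ) = fun p =>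
      (∫ y, w (π p₀) y * h p y ∂μ) + ∫ y, (w (π p) y - w (π p₀) y) * h p y ∂μ := by
    funext p
    rw [← integral_add (hint _ (hw_int _) p)
      (hint (fun y => w (π p) y - w (π p₀) y) ((hw_int _).sub (hw_int _)) p)]
    simp only [sub_mul, add_sub_cancel]
  have hfrozen : ContinuousAt (fun p => ∫ y, w (π p₀) y * h p y ∂μ) p₀ := by
    refine continuousAt_of_dominated (bound := fun y => B * |w (π p₀) y|)
      (Eventually.of_forall fun p => (hint _ (hw_int _) p).aestronglyMeasurable)
      (Eventually.of_forall fun p => ae_of_all _ fun y => ?_)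
      ((hw_int _).abs.const_mul B) (ae_of_all _ fun y => ((hh_cont y).const_mul _).continuousAt)
    rw [Real.norm_eq_abs, abs_mul, mul_comm B]
    exact mul_le_mul_of_nonneg_left (hh_bdd p y) (abs_nonneg _)
  have hL1 : Tendsto (fun p => ∫ y, |w (π p) y - w (π p₀) y| ∂μ) (𝓝 p₀) (𝓝 0) := by
    refine squeeze_zero (fun p => integral_nonneg fun y => abs_nonneg _)
      (fun p => hw_lip _ _) ?_
    simpa using ((hπ.tendsto p₀).sub_const (π p₀)).norm.const_mul K
  have hmoving : Tendsto (fun p => ∫ y, (w (π p) y - w (π p₀) y) * h p y ∂μ) (𝓝 p₀) (𝓝 0) := by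
    refine squeeze_zero_norm (fun p => ?_) (by simpa using hL1.const_mul B)
    exact abs_integral_mul_le_of_abs_le ((hw_int _).sub (hw_int _)) (hh_bdd p)
  rw [hsplit, ContinuousAt]
  simpa using hfrozen.tendsto.add hmoving

end KernelIntegral

theorem ContinuousOn.continuous_comp_projIcc {X β : Type*} [TopologicalSpace X]
    [TopologicalSpace β] {u : X → ℝ → β} {a b : ℝ} (hab : a ≤ b)
    (hu : ContinuousOn (fun p : X × ℝ => u p.1 p.2) (univ ×ˢ Icc a b)) :
    Continuous fun p : X × ℝ => u p.1 (projIcc a b hab p.2) :=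
  hu.comp_continuous (continuous_fst.prodMk (continuous_subtype_val.comp
    ((continuous_projIcc (h := hab)).comp continuous_snd))) fun _ => ⟨mem_univ _, Subtype.mem _⟩

section Aop

variable {m : ℕ} {w : (Fin m → ℝ) → (Fin m → ℝ) → ℝ} {f g : ℝ → ℝ} {γ : ℝ}

theorem abs_modulated_activation_le (hf : ∀ s, |f s| ≤ 1) (hg : ∀ s, |g s| ≤ 1) (a b : ℝ) :
    |(1 + γ * g a) * f b| ≤ 1 + |γ| := by
  have hmod : |1 + γ * g a| ≤ 1 + |γ| :=
    calc |1 + γ * g a| ≤ |1| + |γ * g a| := abs_add_le _ _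
      _ = 1 + |γ| * |g a| := by rw [abs_one, abs_mul]
      _ ≤ 1 + |γ| * 1 := by gcongr; exact hg a
      _ = 1 + |γ| := by rw [mul_one]
  rw [abs_mul, ← mul_one (1 + |γ|)]
  exact mul_le_mul hmod (hf b) (abs_nonneg _) (by positivity)

theorem Aop_congr {u v : (Fin m → ℝ) → ℝ → ℝ} {t : ℝ} (ht : 0 ≤ t)
    (huv : ∀ x, ∀ s ∈ Icc 0 t, u x s = v x s) (x : Fin m → ℝ) :
    Aop w f g γ u x t = Aop w f g γ v x t := by
  refine intervalIntegral.integral_congr fun s hs => ?_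
  rw [uIcc_of_le ht] at hs
  have hus : ∀ y, u y s = v y s := fun y => huv y s hs
  simp only [hus]

theorem continuous_Aop {Kw : ℝ} {u : (Fin m → ℝ) → ℝ → ℝ}
    (hw_int : ∀ x, Integrable fun y => w x y)
    (hw_lip : ∀ x x', (∫ y, |w x y - w x' y|) ≤ Kw * ‖x - x'‖)
    (hf : Continuous f) (hf_bdd : ∀ s, |f s| ≤ 1) (hg : Continuous g) (hg_bdd : ∀ s, |g s| ≤ 1)
    (hu : Continuous (Function.uncurry u)) :
    Continuous (Function.uncurry (Aop w f g γ u)) := by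
  have hu_slice : ∀ s, Continuous fun y => u y s := fun s => hu.comp (.prodMk_left s)
  have hu_fiber : ∀ y, Continuous (u y) := fun y => hu.comp (.prodMk_right y)
  have hh_cont : ∀ p : (Fin m → ℝ) × ℝ,
      Continuous fun y => (1 + γ * g (u p.1 p.2 - u y p.2)) * f (u y p.2) := fun p => by
    have := hu_slice p.2
    fun_prop
  have hinput := continuous_integral_kernel_mul (π := Prod.fst) (μ := volume) continuous_fst
    hw_int hw_lip (fun p => (hh_cont p).aestronglyMeasurable)
    (fun p y => abs_modulated_activation_le hf_bdd hg_bdd _ _)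
    (fun y => by have := hu_fiber y; fun_prop)
  simp only [← mul_assoc] at hinput
  have hF : Continuous (Function.uncurry fun x s =>
      -(u x s) + ∫ y, w x y * (1 + γ * g (u x s - u y s)) * f (u y s)) := hu.neg.add hinput
  exact intervalIntegral.continuous_parametric_primitive_of_continuous hF

theorem abs_Aop_le {Cw M : ℝ} {u : (Fin m → ℝ) → ℝ → ℝ}
    (hw_int : ∀ x, Integrable fun y => w x y) (hw_L1 : ∀ x, (∫ y, |w x y|) ≤ Cw)
    (hf_bdd : ∀ s, |f s| ≤ 1) (hg_bdd : ∀ s, |g s| ≤ 1) (hu_bdd : ∀ x s, |u x s| ≤ M)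
    (x : Fin m → ℝ) (t : ℝ) :
    |Aop w f g γ u x t| ≤ (M + (1 + |γ|) * Cw) * |t| := by
  have hF : ∀ s, |-(u x s) + ∫ y, w x y * (1 + γ * g (u x s - u y s)) * f (u y s)|
      ≤ M + (1 + |γ|) * Cw := fun s => by
    have hinput := abs_integral_mul_le_of_abs_le (hw_int x)
      (fun y => abs_modulated_activation_le hf_bdd hg_bdd (γ := γ) (u x s - u y s) (u y s))
    simp only [← mul_assoc] at hinput
    refine (abs_add_le _ _).trans ?_
    rw [abs_neg]
    exact add_le_add (hu_bdd x s) (hinput.trans (by gcongr; exact hw_L1 x))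
  have hA := intervalIntegral.norm_integral_le_of_norm_le_const (a := 0) (b := t)
    fun s _ => (Real.norm_eq_abs _).trans_le (hF s)
  rwa [sub_zero, Real.norm_eq_abs] at hA

end Aop

theorem stmt_4_general {m : ℕ}
    (w : (Fin m → ℝ) → (Fin m → ℝ) → ℝ)
    (Cw Kw : ℝ)
    (hw_int : ∀ x, Integrable fun y => w x y)
    (hw_L1 : ∀ x, (∫ y, |w x y|) ≤ Cw)
    (hw_lip : ∀ x x', (∫ y, |w x y - w x' y|) ≤ Kw * ‖x - x'‖)
    (f g : ℝ → ℝ)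
    (hf_smooth : ContDiff ℝ 1 f)
    (hf_range : ∀ s, 0 ≤ f s ∧ f s ≤ 1)
    (hg_smooth : ContDiff ℝ 1 g)
    (hg_range : ∀ s, 0 ≤ g s ∧ g s ≤ 1)
    (γ : ℝ)
    (ρ : ℝ) (hρ : 0 < ρ)
    (u : (Fin m → ℝ) → ℝ → ℝ)
    (hu_cont : ContinuousOn (fun p : (Fin m → ℝ) × ℝ => u p.1 p.2) (univ ×ˢ Icc 0 ρ))
    (hu_bdd : ∃ M, ∀ (x : Fin m → ℝ), ∀ t ∈ Icc (0:ℝ) ρ, |u x t| ≤ M) :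
    ContinuousOn (fun p : (Fin m → ℝ) × ℝ => Aop w f g γ u p.1 p.2) (univ ×ˢ Icc 0 ρ) ∧
    (∃ M, ∀ (x : Fin m → ℝ), ∀ t ∈ Icc (0:ℝ) ρ, |Aop w f g γ u x t| ≤ M) ∧
    (∀ x : Fin m → ℝ, ContinuousOn (fun t => Aop w f g γ u x t) (Icc 0 ρ)) := by
  obtain ⟨M, hM⟩ := hu_bdd
  have hf_bdd : ∀ s, |f s| ≤ 1 := fun s => abs_le.2 ⟨by linarith [hf_range s], (hf_range s).2⟩
  have hg_bdd : ∀ s, |g s| ≤ 1 := fun s => abs_le.2 ⟨by linarith [hg_range s], (hg_range s).2⟩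
  -- `Aop` on `[0, ρ]` only sees `u` on `[0, ρ]`, so we may extend `u` constantly in time.
  set v : (Fin m → ℝ) → ℝ → ℝ := fun x s => u x (projIcc 0 ρ hρ.le s)
  have hAop_eq : ∀ x, ∀ t ∈ Icc 0 ρ, Aop w f g γ u x t = Aop w f g γ v x t :=
    fun x t ht => Aop_congr ht.1 (fun y s hs => by
      simp only [v, projIcc_of_mem hρ.le ⟨hs.1, hs.2.trans ht.2⟩]) x
  have hcont : ContinuousOn (fun p : (Fin m → ℝ) × ℝ => Aop w f g γ u p.1 p.2)
      (univ ×ˢ Icc 0 ρ) :=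
    (continuous_Aop (u := v) hw_int hw_lip hf_smooth.continuous hf_bdd hg_smooth.continuous hg_bdd
      (hu_cont.continuous_comp_projIcc hρ.le)).continuousOn.congr fun p hp => hAop_eq p.1 p.2 hp.2
  have hC : 0 ≤ M + (1 + |γ|) * Cw := by
    have hM0 : 0 ≤ M := (abs_nonneg _).trans (hM 0 0 ⟨le_rfl, hρ.le⟩)
    have hCw0 : 0 ≤ Cw := (integral_nonneg fun y => abs_nonneg (w 0 y)).trans (hw_L1 0)
    positivity
  refine ⟨hcont, ⟨(M + (1 + |γ|) * Cw) * ρ, fun x t ht => ?_⟩,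
    fun x => hcont.comp (Continuous.prodMk_right x).continuousOn fun t ht => ⟨mem_univ x, ht⟩⟩
  rw [hAop_eq x t ht]
  calc |Aop w f g γ v x t| ≤ (M + (1 + |γ|) * Cw) * |t| :=
        abs_Aop_le hw_int hw_L1 hf_bdd hg_bdd (fun x s => hM x _ (Subtype.mem _)) x t
    _ ≤ (M + (1 + |γ|) * Cw) * ρ := by
      rw [abs_of_nonneg ht.1]; exact mul_le_mul_of_nonneg_left ht.2 hC

/-- the operator `A` maps `X_ρ = C_b(ℝ^m × [0,ρ])` into itself; in
particular, for every `u ∈ X_ρ` and fixed `x`, the map `t ↦ (Au)(x,t)` is continuous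
on `[0,ρ]`. -/
theorem stmt_4 {m : ℕ} (hm : 1 ≤ m)
    (w : (Fin m → ℝ) → (Fin m → ℝ) → ℝ)
    (Cinf Cw Kw : ℝ) (hCw : 0 < Cw) (hKw : 0 < Kw)
    (hw_meas : Measurable (Function.uncurry w))
    (hw_bdd : ∀ x y, |w x y| ≤ Cinf)
    (hw_int : ∀ x, Integrable fun y => w x y)
    (hw_L1 : ∀ x, (∫ y, |w x y|) ≤ Cw)
    (hw_lip : ∀ x x', (∫ y, |w x y - w x' y|) ≤ Kw * ‖x - x'‖)
    (f g : ℝ → ℝ)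
    (hf_smooth : ContDiff ℝ 1 f) (hf_deriv : ∃ B, ∀ s, |deriv f s| ≤ B)
    (hf_range : ∀ s, 0 ≤ f s ∧ f s ≤ 1)
    (hg_smooth : ContDiff ℝ 1 g) (hg_deriv : ∃ B, ∀ s, |deriv g s| ≤ B)
    (hg_range : ∀ s, 0 ≤ g s ∧ g s ≤ 1)
    (γ : ℝ) (hγ : 0 ≤ γ)
    (ρ : ℝ) (hρ : 0 < ρ)
    (u : (Fin m → ℝ) → ℝ → ℝ)
    (hu_meas : Measurable (Function.uncurry u))
    (hu_cont : ContinuousOn (fun p : (Fin m → ℝ) × ℝ => u p.1 p.2) (univ ×ˢ Icc 0 ρ))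
    (hu_bdd : ∃ M, ∀ (x : Fin m → ℝ), ∀ t ∈ Icc (0:ℝ) ρ, |u x t| ≤ M) :
    ContinuousOn (fun p : (Fin m → ℝ) × ℝ => Aop w f g γ u p.1 p.2) (univ ×ˢ Icc 0 ρ) ∧
    (∃ M, ∀ (x : Fin m → ℝ), ∀ t ∈ Icc (0:ℝ) ρ, |Aop w f g γ u x t| ≤ M) ∧
    (∀ x : Fin m → ℝ, ContinuousOn (fun t => Aop w f g γ u x t) (Icc 0 ρ)) :=
  stmt_4_general w Cw Kw hw_int hw_L1 hw_lip f g hf_smooth hf_range hg_smooth hg_range γ ρ hρ u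
    hu_cont hu_bdd
end

section
/- Let w be a synaptic kernel with sup_{x∈ℝ^m} ∫_{ℝ^m} |w(x,y)| dy ≤ C_w, let f, g be an activation function and a learning modulation function with Lipschitz constants L and K respectively, let γ ≥ 0 and ρ > 0. Then the operator A on X_ρ = C_b(ℝ^m × [0,ρ]) defined by (Au)(x,t) = ∫_0^t [ −u(x,s) + ∫_{ℝ^m} w(x,y)(1 + γ g(u(x,s) − u(y,s))) f(u(y,s)) dy ] ds satisfies, for all u₁, u₂ ∈ X_ρ, ‖Au₁ − Au₂‖_ρ ≤ ρ[1 + L C_w + γ(L + 2K) C_w] ‖u₁ − u₂‖_ρ; in particular A is a contraction on X_ρ whenever ρ[1 + L C_w + γ(L + 2K) C_w] < 1. -/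
open MeasureTheory Set

lemma key_est (f g : ℝ → ℝ) (L K γ N : ℝ) (hL : 0 ≤ L) (hK : 0 ≤ K) (hγ : 0 ≤ γ)
    (hf_range : ∀ s, 0 ≤ f s ∧ f s ≤ 1) (hg_range : ∀ s, 0 ≤ g s ∧ g s ≤ 1)
    (hf_lip : ∀ a b, |f a - f b| ≤ L * |a - b|)
    (hg_lip : ∀ a b, |g a - g b| ≤ K * |a - b|)
    (a₁ a₂ b₁ b₂ : ℝ) (ha : |a₁ - a₂| ≤ 2 * N) (hb : |b₁ - b₂| ≤ N) :
    |(1 + γ * g a₁) * f b₁ - (1 + γ * g a₂) * f b₂| ≤ (L + γ * (L + 2 * K)) * N := by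
  have hN0 : 0 ≤ N := (abs_nonneg _).trans hb
  have hΔf : |f b₁ - f b₂| ≤ L * N :=
    (hf_lip b₁ b₂).trans (mul_le_mul_of_nonneg_left hb hL)
  have hΔg : |g a₁ - g a₂| ≤ K * (2 * N) :=
    (hg_lip a₁ a₂).trans (mul_le_mul_of_nonneg_left ha hK)
  have hga : |g a₁| ≤ 1 := abs_le.mpr ⟨by linarith [(hg_range a₁).1], (hg_range a₁).2⟩
  have hfb : |f b₂| ≤ 1 := abs_le.mpr ⟨by linarith [(hf_range b₂).1], (hf_range b₂).2⟩
  have he : (1 + γ * g a₁) * f b₁ - (1 + γ * g a₂) * f b₂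
      = (f b₁ - f b₂) + γ * (g a₁ * (f b₁ - f b₂) + (g a₁ - g a₂) * f b₂) := by ring
  rw [he]
  calc |(f b₁ - f b₂) + γ * (g a₁ * (f b₁ - f b₂) + (g a₁ - g a₂) * f b₂)|
      ≤ |f b₁ - f b₂| + γ * (|g a₁| * |f b₁ - f b₂| + |g a₁ - g a₂| * |f b₂|) := by
        refine (abs_add_le _ _).trans ?_
        rw [abs_mul, abs_of_nonneg hγ]
        gcongr
        refine (abs_add_le _ _).trans ?_
        rw [abs_mul, abs_mul]
    _ ≤ L * N + γ * (1 * (L * N) + K * (2 * N) * 1) := by gcongr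
    _ = (L + γ * (L + 2 * K)) * N := by ring

/-- Contraction estimate: for all `u₁, u₂ ∈ X_ρ = C_b(ℝ^m × [0,ρ])`,
`‖Au₁ - Au₂‖_ρ ≤ ρ [1 + L C_w + γ (L + 2K) C_w] ‖u₁ - u₂‖_ρ`; the sup-norm inequality
is expressed by: every uniform bound `N` on `|u₁ - u₂|` over `ℝ^m × [0,ρ]` yields the
bound `ρ [1 + L C_w + γ (L + 2K) C_w] N` on `|Au₁ - Au₂|` there.  In particular `A` is
a contraction whenever `ρ [1 + L C_w + γ (L + 2K) C_w] < 1`. -/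
theorem stmt_5 {m : ℕ} (hm : 1 ≤ m)
    (w : (Fin m → ℝ) → (Fin m → ℝ) → ℝ)
    (Cinf Cw Kw : ℝ) (hCw : 0 < Cw) (hKw : 0 < Kw)
    (hw_meas : Measurable (Function.uncurry w))
    (hw_bdd : ∀ x y, |w x y| ≤ Cinf)
    (hw_int : ∀ x, Integrable fun y => w x y)
    (hw_L1 : ∀ x, (∫ y, |w x y|) ≤ Cw)
    (hw_lip : ∀ x x', (∫ y, |w x y - w x' y|) ≤ Kw * ‖x - x'‖)
    (f g : ℝ → ℝ)
    (hf_smooth : ContDiff ℝ 1 f) (hf_deriv : ∃ B, ∀ s, |deriv f s| ≤ B)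
    (hf_range : ∀ s, 0 ≤ f s ∧ f s ≤ 1)
    (hg_smooth : ContDiff ℝ 1 g) (hg_deriv : ∃ B, ∀ s, |deriv g s| ≤ B)
    (hg_range : ∀ s, 0 ≤ g s ∧ g s ≤ 1)
    (L K : ℝ) (hL : 0 ≤ L) (hK : 0 ≤ K)
    (hf_lip : ∀ a b, |f a - f b| ≤ L * |a - b|)
    (hg_lip : ∀ a b, |g a - g b| ≤ K * |a - b|)
    (γ : ℝ) (hγ : 0 ≤ γ)
    (ρ : ℝ) (hρ : 0 < ρ)
    (u₁ u₂ : (Fin m → ℝ) → ℝ → ℝ)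
    (hu₁_meas : Measurable (Function.uncurry u₁))
    (hu₂_meas : Measurable (Function.uncurry u₂))
    (hu₁_cont : ContinuousOn (fun p : (Fin m → ℝ) × ℝ => u₁ p.1 p.2) (univ ×ˢ Icc 0 ρ))
    (hu₂_cont : ContinuousOn (fun p : (Fin m → ℝ) × ℝ => u₂ p.1 p.2) (univ ×ˢ Icc 0 ρ))
    (hu₁_bdd : ∃ M, ∀ (x : Fin m → ℝ), ∀ t ∈ Icc (0:ℝ) ρ, |u₁ x t| ≤ M)
    (hu₂_bdd : ∃ M, ∀ (x : Fin m → ℝ), ∀ t ∈ Icc (0:ℝ) ρ, |u₂ x t| ≤ M)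
    (N : ℝ)
    (hN : ∀ (x : Fin m → ℝ), ∀ t ∈ Icc (0:ℝ) ρ, |u₁ x t - u₂ x t| ≤ N) :
    ∀ (x : Fin m → ℝ), ∀ t ∈ Icc (0:ℝ) ρ,
      |Aop w f g γ u₁ x t - Aop w f g γ u₂ x t| ≤
        ρ * (1 + L * Cw + γ * (L + 2 * K) * Cw) * N := by
  intro x t ht
  obtain ⟨M₁, hM₁⟩ := hu₁_bdd
  obtain ⟨M₂, hM₂⟩ := hu₂_bdd
  have hN0 : 0 ≤ N := (abs_nonneg _).trans (hN x 0 ⟨le_refl 0, hρ.le⟩)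
  have hfmeas : Measurable f := hf_smooth.continuous.measurable
  have hgmeas : Measurable g := hg_smooth.continuous.measurable
  set c : ℝ := L + γ * (L + 2 * K) with hc
  have hc0 : 0 ≤ c := by positivity
  -- measurability of the two-variable inner integrands
  have hwy : Measurable fun p : ℝ × (Fin m → ℝ) => w x p.2 :=
    hw_meas.comp (measurable_const.prodMk measurable_snd)
  have hGmeas : ∀ (u : (Fin m → ℝ) → ℝ → ℝ), Measurable (Function.uncurry u) →
      Measurable (fun p : ℝ × (Fin m → ℝ) =>
        w x p.2 * (1 + γ * g (u x p.1 - u p.2 p.1)) * f (u p.2 p.1)) := by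
    intro u hu
    have h1 : Measurable fun p : ℝ × (Fin m → ℝ) => u x p.1 :=
      hu.comp (measurable_const.prodMk measurable_fst)
    have h2 : Measurable fun p : ℝ × (Fin m → ℝ) => u p.2 p.1 :=
      hu.comp (measurable_snd.prodMk measurable_fst)
    exact (hwy.mul ((measurable_const.add
      (measurable_const.mul (hgmeas.comp (h1.sub h2)))))).mul (hfmeas.comp h2)
  have hG₁ := hGmeas u₁ hu₁_meas
  have hG₂ := hGmeas u₂ hu₂_meas
  -- per-slice bound and integrability in y
  have hGbound : ∀ (u : (Fin m → ℝ) → ℝ → ℝ) (s : ℝ) (y : Fin m → ℝ),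
      ‖w x y * (1 + γ * g (u x s - u y s)) * f (u y s)‖ ≤ (1 + γ) * |w x y| := by
    intro u s y
    rw [Real.norm_eq_abs, abs_mul, abs_mul]
    have h1 : |1 + γ * g (u x s - u y s)| ≤ 1 + γ := by
      rw [abs_of_nonneg (by nlinarith [(hg_range (u x s - u y s)).1])]
      nlinarith [(hg_range (u x s - u y s)).2]
    have h2 : |f (u y s)| ≤ 1 :=
      abs_le.mpr ⟨by linarith [(hf_range (u y s)).1], (hf_range (u y s)).2⟩
    nlinarith [abs_nonneg (w x y), abs_nonneg (1 + γ * g (u x s - u y s)),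
      abs_nonneg (f (u y s)), mul_le_mul_of_nonneg_left h2 (mul_nonneg (abs_nonneg (w x y)) (abs_nonneg (1 + γ * g (u x s - u y s)))),
      mul_le_mul_of_nonneg_left h1 (abs_nonneg (w x y))]
  have hGint : ∀ (u : (Fin m → ℝ) → ℝ → ℝ), Measurable (Function.uncurry u) → ∀ s : ℝ,
      Integrable (fun y => w x y * (1 + γ * g (u x s - u y s)) * f (u y s)) := by
    intro u hu s
    refine Integrable.mono' (((hw_int x).abs).const_mul (1 + γ)) ?_ ?_
    · exact ((hGmeas u hu).comp (measurable_const.prodMk measurable_id)).aestronglyMeasurable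
    · exact Filter.Eventually.of_forall fun y => hGbound u s y
  -- the inner integral is bounded by (1+γ)*Cw
  have hIbound : ∀ (u : (Fin m → ℝ) → ℝ → ℝ) (s : ℝ),
      ‖∫ y, w x y * (1 + γ * g (u x s - u y s)) * f (u y s)‖ ≤ (1 + γ) * Cw := by
    intro u s
    calc ‖∫ y, w x y * (1 + γ * g (u x s - u y s)) * f (u y s)‖
        ≤ ∫ y, (1 + γ) * |w x y| :=
          norm_integral_le_of_norm_le (((hw_int x).abs).const_mul (1 + γ))
            (Filter.Eventually.of_forall fun y => hGbound u s y)
      _ = (1 + γ) * ∫ y, |w x y| := integral_const_mul _ _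
      _ ≤ (1 + γ) * Cw := by
          have := hw_L1 x
          nlinarith
  -- the integrands in time
  set F₁ : ℝ → ℝ := fun s => -(u₁ x s) + ∫ y, w x y * (1 + γ * g (u₁ x s - u₁ y s)) * f (u₁ y s)
    with hF₁
  set F₂ : ℝ → ℝ := fun s => -(u₂ x s) + ∫ y, w x y * (1 + γ * g (u₂ x s - u₂ y s)) * f (u₂ y s)
    with hF₂
  have hFmeas : ∀ (u : (Fin m → ℝ) → ℝ → ℝ), Measurable (Function.uncurry u) →
      StronglyMeasurable (fun s : ℝ =>
        -(u x s) + ∫ y, w x y * (1 + γ * g (u x s - u y s)) * f (u y s)) := by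
    intro u hu
    have h1 : StronglyMeasurable fun s : ℝ => u x s :=
      (hu.comp (measurable_const.prodMk measurable_id)).stronglyMeasurable
    exact h1.neg.add ((hGmeas u hu).stronglyMeasurable.integral_prod_right')
  have hFint : ∀ (u : (Fin m → ℝ) → ℝ → ℝ) (M : ℝ), Measurable (Function.uncurry u) →
      (∀ (x' : Fin m → ℝ), ∀ t' ∈ Icc (0:ℝ) ρ, |u x' t'| ≤ M) →
      IntervalIntegrable (fun s : ℝ =>
        -(u x s) + ∫ y, w x y * (1 + γ * g (u x s - u y s)) * f (u y s)) volume 0 t := by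
    intro u M hu hM
    rw [intervalIntegrable_iff]
    haveI : Fact (volume (Set.uIoc (0:ℝ) t) < ⊤) := ⟨by rw [Set.uIoc]; exact measure_Ioc_lt_top⟩
    refine Integrable.mono' (integrable_const (M + (1 + γ) * Cw)) ?_ ?_
    · exact ((hFmeas u hu).aestronglyMeasurable).restrict
    · rw [ae_restrict_iff' measurableSet_uIoc]
      refine Filter.Eventually.of_forall fun s hs => ?_
      have hs' : s ∈ Icc (0:ℝ) ρ := by
        rw [uIoc_of_le ht.1] at hs
        exact ⟨hs.1.le, hs.2.trans ht.2⟩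
      calc ‖-(u x s) + ∫ y, w x y * (1 + γ * g (u x s - u y s)) * f (u y s)‖
          ≤ ‖-(u x s)‖ + ‖∫ y, w x y * (1 + γ * g (u x s - u y s)) * f (u y s)‖ :=
            norm_add_le _ _
        _ ≤ M + (1 + γ) * Cw := by
            rw [norm_neg, Real.norm_eq_abs]
            exact add_le_add (hM x s hs') (hIbound u s)
  have hFint₁ := hFint u₁ M₁ hu₁_meas hM₁
  have hFint₂ := hFint u₂ M₂ hu₂_meas hM₂
  -- the pointwise-in-s estimate
  have hstep : ∀ s ∈ Set.uIoc (0:ℝ) t, ‖F₁ s - F₂ s‖ ≤ (1 + c * Cw) * N := by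
    intro s hs
    have hs' : s ∈ Icc (0:ℝ) ρ := by
      rw [uIoc_of_le ht.1] at hs
      exact ⟨hs.1.le, hs.2.trans ht.2⟩
    have hdiff : ∀ y : Fin m → ℝ,
        ‖w x y * (1 + γ * g (u₁ x s - u₁ y s)) * f (u₁ y s)
          - w x y * (1 + γ * g (u₂ x s - u₂ y s)) * f (u₂ y s)‖ ≤ |w x y| * (c * N) := by
      intro y
      have hb : |u₁ y s - u₂ y s| ≤ N := hN y s hs'
      have ha : |(u₁ x s - u₁ y s) - (u₂ x s - u₂ y s)| ≤ 2 * N := by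
        have h1 := hN x s hs'
        have h2 := hN y s hs'
        calc |(u₁ x s - u₁ y s) - (u₂ x s - u₂ y s)|
            = |(u₁ x s - u₂ x s) - (u₁ y s - u₂ y s)| := by ring_nf
          _ ≤ |u₁ x s - u₂ x s| + |u₁ y s - u₂ y s| := abs_sub _ _
          _ ≤ 2 * N := by linarith
      have := key_est f g L K γ N hL hK hγ hf_range hg_range hf_lip hg_lip
        (u₁ x s - u₁ y s) (u₂ x s - u₂ y s) (u₁ y s) (u₂ y s) ha hb
      calc ‖w x y * (1 + γ * g (u₁ x s - u₁ y s)) * f (u₁ y s)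
            - w x y * (1 + γ * g (u₂ x s - u₂ y s)) * f (u₂ y s)‖
          = |w x y| * |(1 + γ * g (u₁ x s - u₁ y s)) * f (u₁ y s)
            - (1 + γ * g (u₂ x s - u₂ y s)) * f (u₂ y s)| := by
            rw [Real.norm_eq_abs, ← abs_mul]; ring_nf
        _ ≤ |w x y| * (c * N) := mul_le_mul_of_nonneg_left this (abs_nonneg _)
    have hinner : ‖(∫ y, w x y * (1 + γ * g (u₁ x s - u₁ y s)) * f (u₁ y s))
        - ∫ y, w x y * (1 + γ * g (u₂ x s - u₂ y s)) * f (u₂ y s)‖ ≤ c * Cw * N := by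
      rw [← integral_sub (hGint u₁ hu₁_meas s) (hGint u₂ hu₂_meas s)]
      calc ‖∫ y, (w x y * (1 + γ * g (u₁ x s - u₁ y s)) * f (u₁ y s)
              - w x y * (1 + γ * g (u₂ x s - u₂ y s)) * f (u₂ y s))‖
          ≤ ∫ y, |w x y| * (c * N) :=
            norm_integral_le_of_norm_le ((hw_int x).abs.mul_const _)
              (Filter.Eventually.of_forall hdiff)
        _ = (∫ y, |w x y|) * (c * N) := integral_mul_const _ _
        _ ≤ Cw * (c * N) := by
            have := hw_L1 x
            have : (0:ℝ) ≤ c * N := mul_nonneg hc0 hN0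
            nlinarith [hw_L1 x]
        _ = c * Cw * N := by ring
    calc ‖F₁ s - F₂ s‖
        = ‖(-(u₁ x s) - -(u₂ x s)) + ((∫ y, w x y * (1 + γ * g (u₁ x s - u₁ y s)) * f (u₁ y s))
            - ∫ y, w x y * (1 + γ * g (u₂ x s - u₂ y s)) * f (u₂ y s))‖ := by
          rw [hF₁, hF₂]; congr 1; ring
      _ ≤ ‖-(u₁ x s) - -(u₂ x s)‖ + ‖(∫ y, w x y * (1 + γ * g (u₁ x s - u₁ y s)) * f (u₁ y s))
            - ∫ y, w x y * (1 + γ * g (u₂ x s - u₂ y s)) * f (u₂ y s)‖ := norm_add_le _ _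
      _ ≤ N + c * Cw * N := by
          refine add_le_add ?_ hinner
          rw [Real.norm_eq_abs]
          have : |-(u₁ x s) - -(u₂ x s)| = |u₁ x s - u₂ x s| := by
            rw [show -(u₁ x s) - -(u₂ x s) = -(u₁ x s - u₂ x s) by ring, abs_neg]
          rw [this]
          exact hN x s hs'
      _ = (1 + c * Cw) * N := by ring
  have hmain : |Aop w f g γ u₁ x t - Aop w f g γ u₂ x t| ≤ (1 + c * Cw) * N * |t - 0| := by
    rw [show Aop w f g γ u₁ x t - Aop w f g γ u₂ x t
        = ∫ s in (0:ℝ)..t, (F₁ s - F₂ s) from by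
      rw [intervalIntegral.integral_sub hFint₁ hFint₂]; rfl]
    exact intervalIntegral.norm_integral_le_of_norm_le_const hstep
  have hcoef : (0:ℝ) ≤ (1 + c * Cw) * N := by positivity
  calc |Aop w f g γ u₁ x t - Aop w f g γ u₂ x t|
      ≤ (1 + c * Cw) * N * |t - 0| := hmain
    _ ≤ (1 + c * Cw) * N * ρ := by
        refine mul_le_mul_of_nonneg_left ?_ hcoef
        rw [sub_zero, abs_of_nonneg ht.1]
        exact ht.2
    _ = ρ * (1 + L * Cw + γ * (L + 2 * K) * Cw) * N := by rw [hc]; ring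
end

section
/- Let w be a synaptic kernel with sup_{x∈ℝ^m} ∫_{ℝ^m} |w(x,y)| dy ≤ C_w, let f, g be an activation function and a learning modulation function with Lipschitz constants L and K, let γ ≥ 0 be fixed, and let ρ > 0 satisfy ρ[1 + L C_w + γ(L + 2K) C_w] < 1. Then for every u_0 ∈ C_b(ℝ^m) there exists a unique u ∈ C_b(ℝ^m × [0,ρ]) solving the initial value problem u_t(x,t) = −u(x,t) + ∫_{ℝ^m} w(x,y)[1 + γ g(u(x,t) − u(y,t))] f(u(y,t)) dy, u(x,0) = u_0(x). -/
open MeasureTheory Set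

set_option maxHeartbeats 2000000

/-- Local existence and uniqueness: if
`ρ [1 + L C_w + γ (L + 2K) C_w] < 1`, then for every `u₀ ∈ C_b(ℝ^m)` there is a unique
bounded continuous solution `u` on `ℝ^m × [0,ρ]` of the plastic neural field IVP. -/
theorem stmt_6 {m : ℕ} (hm : 1 ≤ m)
    (w : (Fin m → ℝ) → (Fin m → ℝ) → ℝ)
    (Cinf Cw Kw : ℝ) (hCw : 0 < Cw) (hKw : 0 < Kw)
    (hw_meas : Measurable (Function.uncurry w))
    (hw_bdd : ∀ x y, |w x y| ≤ Cinf)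
    (hw_int : ∀ x, Integrable fun y => w x y)
    (hw_L1 : ∀ x, (∫ y, |w x y|) ≤ Cw)
    (hw_lip : ∀ x x', (∫ y, |w x y - w x' y|) ≤ Kw * ‖x - x'‖)
    (f g : ℝ → ℝ)
    (hf_smooth : ContDiff ℝ 1 f) (hf_deriv : ∃ B, ∀ s, |deriv f s| ≤ B)
    (hf_range : ∀ s, 0 ≤ f s ∧ f s ≤ 1)
    (hg_smooth : ContDiff ℝ 1 g) (hg_deriv : ∃ B, ∀ s, |deriv g s| ≤ B)
    (hg_range : ∀ s, 0 ≤ g s ∧ g s ≤ 1)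
    (L K : ℝ) (hL : 0 ≤ L) (hK : 0 ≤ K)
    (hf_lip : ∀ a b, |f a - f b| ≤ L * |a - b|)
    (hg_lip : ∀ a b, |g a - g b| ≤ K * |a - b|)
    (γ : ℝ) (hγ : 0 ≤ γ)
    (ρ : ℝ) (hρ : 0 < ρ)
    (hq : ρ * (1 + L * Cw + γ * (L + 2 * K) * Cw) < 1)
    (u₀ : BoundedContinuousFunction (Fin m → ℝ) ℝ) :
    ∃ u : (Fin m → ℝ) → ℝ → ℝ,
      (ContinuousOn (fun p : (Fin m → ℝ) × ℝ => u p.1 p.2) (univ ×ˢ Icc 0 ρ) ∧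
       (∃ M, ∀ (x : Fin m → ℝ), ∀ t ∈ Icc (0:ℝ) ρ, |u x t| ≤ M) ∧
       (∀ x, u x 0 = u₀ x) ∧
       (∀ (x : Fin m → ℝ), ∀ t ∈ Icc (0:ℝ) ρ,
         HasDerivWithinAt (u x)
           (-(u x t) + ∫ y, w x y * (1 + γ * g (u x t - u y t)) * f (u y t))
           (Icc 0 ρ) t)) ∧
      (∀ v : (Fin m → ℝ) → ℝ → ℝ,
        (ContinuousOn (fun p : (Fin m → ℝ) × ℝ => v p.1 p.2) (univ ×ˢ Icc 0 ρ) ∧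
         (∃ M, ∀ (x : Fin m → ℝ), ∀ t ∈ Icc (0:ℝ) ρ, |v x t| ≤ M) ∧
         (∀ x, v x 0 = u₀ x) ∧
         (∀ (x : Fin m → ℝ), ∀ t ∈ Icc (0:ℝ) ρ,
           HasDerivWithinAt (v x)
             (-(v x t) + ∫ y, w x y * (1 + γ * g (v x t - v y t)) * f (v y t))
             (Icc 0 ρ) t)) →
        ∀ (x : Fin m → ℝ), ∀ t ∈ Icc (0:ℝ) ρ, v x t = u x t) := by
  classical
  have hfc : Continuous f := hf_smooth.continuous
  have hgc : Continuous g := hg_smooth.continuous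
  -- the clamping function
  set τ : ℝ → ℝ := fun t => max 0 (min t ρ) with hτ
  have hτ0 : ∀ t, 0 ≤ τ t := fun t => le_max_left _ _
  have hτρ : ∀ t, τ t ≤ ρ := fun t => max_le hρ.le (min_le_right _ _)
  have hτmem : ∀ t, τ t ∈ Icc (0:ℝ) ρ := fun t => ⟨hτ0 t, hτρ t⟩
  have hτeq : ∀ t ∈ Icc (0:ℝ) ρ, τ t = t := by
    intro t ht
    simp only [hτ]
    rw [min_eq_left ht.2, max_eq_right ht.1]
  have hτcont : Continuous τ := continuous_const.max (continuous_id.min continuous_const)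
  have hτlip : ∀ t t', |τ t - τ t'| ≤ |t - t'| := by
    intro t t'
    simp only [hτ]
    rw [max_comm 0 (min t ρ), max_comm 0 (min t' ρ)]
    refine (abs_max_sub_max_le_abs _ _ _).trans ?_
    refine (abs_min_sub_min_le_max _ _ _ _).trans ?_
    simp
  -- basic bounds on the nonlinearity
  have habs1 : ∀ a, |1 + γ * g a| ≤ 1 + γ := by
    intro a
    rw [abs_le]
    constructor
    · nlinarith [(hg_range a).1, (hg_range a).2]
    · nlinarith [(hg_range a).1, (hg_range a).2]
  have habsf : ∀ b, |f b| ≤ 1 := fun b => abs_le.2 ⟨by linarith [(hf_range b).1], (hf_range b).2⟩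
  have hS_bound : ∀ a b, |(1 + γ * g a) * f b| ≤ 1 + γ := by
    intro a b
    rw [abs_mul]
    calc |1 + γ * g a| * |f b| ≤ (1 + γ) * 1 :=
          mul_le_mul (habs1 a) (habsf b) (abs_nonneg _) (by linarith)
      _ = 1 + γ := mul_one _
  have hS_lip : ∀ a b a' b',
      |(1 + γ * g a) * f b - (1 + γ * g a') * f b'| ≤ (1 + γ) * (L * |b - b'|) + γ * (K * |a - a'|) := by
    intro a b a' b'
    have h1 : (1 + γ * g a) * f b - (1 + γ * g a') * f b'
        = (1 + γ * g a) * (f b - f b') + (γ * (g a - g a')) * f b' := by ring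
    rw [h1]
    refine (abs_add_le _ _).trans ?_
    have e1 : |(1 + γ * g a) * (f b - f b')| ≤ (1 + γ) * (L * |b - b'|) := by
      rw [abs_mul]
      exact mul_le_mul (habs1 a) (hf_lip b b') (abs_nonneg _) (by linarith)
    have e2 : |γ * (g a - g a') * f b'| ≤ γ * (K * |a - a'|) := by
      rw [abs_mul, abs_mul, abs_of_nonneg hγ]
      calc γ * |g a - g a'| * |f b'| ≤ γ * (K * |a - a'|) * 1 := by
            refine mul_le_mul ?_ (habsf b') (abs_nonneg _) (by positivity)
            exact mul_le_mul le_rfl (hg_lip a a') (abs_nonneg _) hγ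
        _ = γ * (K * |a - a'|) := mul_one _
    linarith
  -- the integrand
  set Hf : (BoundedContinuousFunction ((Fin m → ℝ) × ℝ) ℝ) → (Fin m → ℝ) → ℝ → (Fin m → ℝ) → ℝ :=
    fun U x s y => w x y * (1 + γ * g (U (x, s) - U (y, s))) * f (U (y, s)) with hHf
  have hwx_meas : ∀ x, Measurable (w x) := fun x => by
    exact hw_meas.comp measurable_prodMk_left
  have hUxs : ∀ (U : (BoundedContinuousFunction ((Fin m → ℝ) × ℝ) ℝ)) (x : (Fin m → ℝ)), Continuous fun s : ℝ => U (x, s) := fun U x =>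
    U.continuous.comp (continuous_const.prodMk continuous_id)
  have hUys : ∀ (U : (BoundedContinuousFunction ((Fin m → ℝ) × ℝ) ℝ)) (s : ℝ), Continuous fun y : (Fin m → ℝ) => U (y, s) := fun U s =>
    U.continuous.comp (continuous_id.prodMk continuous_const)
  have hH_meas : ∀ (U : (BoundedContinuousFunction ((Fin m → ℝ) × ℝ) ℝ)) x s, AEStronglyMeasurable (Hf U x s) volume := by
    intro U x s
    apply Measurable.aestronglyMeasurable
    refine ((hwx_meas x).mul ?_).mul ?_
    · exact (continuous_const.add (continuous_const.mul
        (hgc.comp (continuous_const.sub (hUys U s))))).measurable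
    · exact (hfc.comp (hUys U s)).measurable
  have habsw_int : ∀ x, Integrable (fun y => |w x y|) volume := fun x => by
    simpa using (hw_int x).abs
  have habs_sub_int : ∀ x x', Integrable (fun y => |w x y - w x' y|) volume := fun x x' => by
    simpa [Pi.sub_apply] using ((hw_int x).sub (hw_int x')).abs
  have hH_bound : ∀ (U : (BoundedContinuousFunction ((Fin m → ℝ) × ℝ) ℝ)) x s y, |Hf U x s y| ≤ |w x y| * (1 + γ) := by
    intro U x s y
    simp only [hHf]
    rw [mul_assoc, abs_mul]
    exact mul_le_mul_of_nonneg_left (hS_bound _ _) (abs_nonneg _)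
  have hH_int : ∀ (U : (BoundedContinuousFunction ((Fin m → ℝ) × ℝ) ℝ)) x s, Integrable (Hf U x s) volume := by
    intro U x s
    refine Integrable.mono' ((habsw_int x).mul_const (1 + γ)) (hH_meas U x s) ?_
    exact ae_of_all _ fun y => by simpa [Real.norm_eq_abs] using hH_bound U x s y
  set Gf : (BoundedContinuousFunction ((Fin m → ℝ) × ℝ) ℝ) → (Fin m → ℝ) → ℝ → ℝ := fun U x s => ∫ y, Hf U x s y with hGf
  -- helper: difference of integrals
  have hdiff : ∀ (F1 F2 b : (Fin m → ℝ) → ℝ), Integrable F1 volume → Integrable F2 volume →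
      Integrable b volume → (∀ y, |F1 y - F2 y| ≤ b y) →
      |(∫ y, F1 y) - ∫ y, F2 y| ≤ ∫ y, b y := by
    intro F1 F2 b h1 h2 hb hle
    rw [← integral_sub h1 h2]
    calc |∫ y, (F1 y - F2 y)| ≤ ∫ y, |F1 y - F2 y| := by
          simpa [Real.norm_eq_abs] using norm_integral_le_integral_norm (fun y => F1 y - F2 y)
      _ ≤ ∫ y, b y := integral_mono (h1.sub h2).abs hb hle
  have hG_bdd : ∀ (U : (BoundedContinuousFunction ((Fin m → ℝ) × ℝ) ℝ)) x s, |Gf U x s| ≤ Cw * (1 + γ) := by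
    intro U x s
    calc |Gf U x s| ≤ ∫ y, |Hf U x s y| := by
          simpa [Real.norm_eq_abs] using norm_integral_le_integral_norm (Hf U x s)
      _ ≤ ∫ y, |w x y| * (1 + γ) :=
          integral_mono (hH_int U x s).abs ((habsw_int x).mul_const _) (hH_bound U x s)
      _ = (∫ y, |w x y|) * (1 + γ) := integral_mul_const _ _
      _ ≤ Cw * (1 + γ) := mul_le_mul_of_nonneg_right (hw_L1 x) (by linarith)
  -- spatial modulus of continuity of Gf
  have hG_x : ∀ (U : (BoundedContinuousFunction ((Fin m → ℝ) × ℝ) ℝ)) x x' s, |Gf U x s - Gf U x' s| ≤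
      (1 + γ) * (Kw * ‖x - x'‖) + γ * K * Cw * |U (x, s) - U (x', s)| := by
    intro U x x' s
    have hb : ∀ y, |Hf U x s y - Hf U x' s y| ≤
        |w x y - w x' y| * (1 + γ) + |w x' y| * (γ * (K * |U (x, s) - U (x', s)|)) := by
      intro y
      have hsplit : Hf U x s y - Hf U x' s y
          = (w x y - w x' y) * ((1 + γ * g (U (x, s) - U (y, s))) * f (U (y, s)))
            + w x' y * ((1 + γ * g (U (x, s) - U (y, s))) * f (U (y, s))
                - (1 + γ * g (U (x', s) - U (y, s))) * f (U (y, s))) := by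
        simp only [hHf]; ring
      rw [hsplit]
      refine (abs_add_le _ _).trans ?_
      have e1 : |(w x y - w x' y) * ((1 + γ * g (U (x, s) - U (y, s))) * f (U (y, s)))|
          ≤ |w x y - w x' y| * (1 + γ) := by
        rw [abs_mul]
        exact mul_le_mul_of_nonneg_left (hS_bound _ _) (abs_nonneg _)
      have e2 : |w x' y * ((1 + γ * g (U (x, s) - U (y, s))) * f (U (y, s))
            - (1 + γ * g (U (x', s) - U (y, s))) * f (U (y, s)))|
          ≤ |w x' y| * (γ * (K * |U (x, s) - U (x', s)|)) := by
        rw [abs_mul]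
        refine mul_le_mul_of_nonneg_left ?_ (abs_nonneg _)
        refine (hS_lip _ _ _ _).trans ?_
        have harg : U (x, s) - U (y, s) - (U (x', s) - U (y, s)) = U (x, s) - U (x', s) := by
          ring
        rw [harg, sub_self, abs_zero, mul_zero, mul_zero, zero_add]
      linarith
    have hbint : Integrable (fun y => |w x y - w x' y| * (1 + γ)
        + |w x' y| * (γ * (K * |U (x, s) - U (x', s)|))) volume :=
      ((habs_sub_int x x').mul_const _).add ((habsw_int x').mul_const _)
    refine (hdiff _ _ _ (hH_int U x s) (hH_int U x' s) hbint hb).trans ?_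
    rw [integral_add ((habs_sub_int x x').mul_const _) ((habsw_int x').mul_const _),
      integral_mul_const, integral_mul_const]
    have t1 : (∫ y, |w x y - w x' y|) * (1 + γ) ≤ (Kw * ‖x - x'‖) * (1 + γ) :=
      mul_le_mul_of_nonneg_right (hw_lip x x') (by linarith)
    have t2 : (∫ y, |w x' y|) * (γ * (K * |U (x, s) - U (x', s)|))
        ≤ Cw * (γ * (K * |U (x, s) - U (x', s)|)) :=
      mul_le_mul_of_nonneg_right (hw_L1 x') (by positivity)
    calc (∫ y, |w x y - w x' y|) * (1 + γ) + (∫ y, |w x' y|) * (γ * (K * |U (x,s) - U (x',s)|))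
        ≤ (Kw * ‖x - x'‖) * (1 + γ) + Cw * (γ * (K * |U (x,s) - U (x',s)|)) := by linarith
      _ = (1 + γ) * (Kw * ‖x - x'‖) + γ * K * Cw * |U (x,s) - U (x',s)| := by ring
  -- contraction modulus of Gf
  set c₂ : ℝ := (1 + γ) * L + 2 * (γ * K) with hc₂
  have hc₂0 : 0 ≤ c₂ := by positivity
  have hG_UV : ∀ (U V : (BoundedContinuousFunction ((Fin m → ℝ) × ℝ) ℝ)) x s, |Gf U x s - Gf V x s| ≤ Cw * (c₂ * dist U V) := by
    intro U V x s
    have hd0 : (0:ℝ) ≤ dist U V := dist_nonneg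
    have hb : ∀ y, |Hf U x s y - Hf V x s y| ≤ |w x y| * (c₂ * dist U V) := by
      intro y
      have hsplit : Hf U x s y - Hf V x s y
          = w x y * ((1 + γ * g (U (x, s) - U (y, s))) * f (U (y, s))
              - (1 + γ * g (V (x, s) - V (y, s))) * f (V (y, s))) := by
        simp only [hHf]; ring
      rw [hsplit, abs_mul]
      refine mul_le_mul_of_nonneg_left ?_ (abs_nonneg _)
      refine (hS_lip _ _ _ _).trans ?_
      have d1 : |U (y, s) - V (y, s)| ≤ dist U V := by
        simpa [Real.dist_eq] using BoundedContinuousFunction.dist_coe_le_dist (f := U) (g := V) (y, s)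
      have d2 : |U (x, s) - V (x, s)| ≤ dist U V := by
        simpa [Real.dist_eq] using BoundedContinuousFunction.dist_coe_le_dist (f := U) (g := V) (x, s)
      have d3 : |(U (x, s) - U (y, s)) - (V (x, s) - V (y, s))| ≤ 2 * dist U V := by
        calc |(U (x, s) - U (y, s)) - (V (x, s) - V (y, s))|
            = |(U (x, s) - V (x, s)) - (U (y, s) - V (y, s))| := by ring_nf
          _ ≤ |U (x, s) - V (x, s)| + |U (y, s) - V (y, s)| := abs_sub _ _
          _ ≤ 2 * dist U V := by linarith
      have e1 : (1 + γ) * (L * |U (y, s) - V (y, s)|) ≤ (1 + γ) * L * dist U V := by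
        rw [mul_assoc]
        refine mul_le_mul_of_nonneg_left ?_ (by linarith)
        exact mul_le_mul_of_nonneg_left d1 hL
      have e2 : γ * (K * |(U (x, s) - U (y, s)) - (V (x, s) - V (y, s))|)
          ≤ γ * K * (2 * dist U V) := by
        rw [mul_assoc]
        refine mul_le_mul_of_nonneg_left ?_ hγ
        exact mul_le_mul_of_nonneg_left d3 hK
      calc (1 + γ) * (L * |U (y,s) - V (y,s)|)
            + γ * (K * |(U (x,s) - U (y,s)) - (V (x,s) - V (y,s))|)
          ≤ (1 + γ) * L * dist U V + γ * K * (2 * dist U V) := by linarith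
        _ = c₂ * dist U V := by rw [hc₂]; ring
    refine (hdiff _ _ _ (hH_int U x s) (hH_int V x s) ((habsw_int x).mul_const _) hb).trans ?_
    rw [integral_mul_const]
    exact mul_le_mul_of_nonneg_right (hw_L1 x) (by positivity)
  -- continuity of Gf in time
  have hG_cont_s : ∀ (U : (BoundedContinuousFunction ((Fin m → ℝ) × ℝ) ℝ)) x, Continuous fun s => Gf U x s := by
    intro U x
    apply continuous_of_dominated (bound := fun y => |w x y| * (1 + γ))
    · exact fun s => hH_meas U x s
    · exact fun s => ae_of_all _ fun y => by simpa [Real.norm_eq_abs] using hH_bound U x s y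
    · exact (habsw_int x).mul_const _
    · refine ae_of_all _ fun y => ?_
      simp only [hHf]
      exact (continuous_const.mul (continuous_const.add (continuous_const.mul
        (hgc.comp ((hUxs U x).sub (hUxs U y)))))).mul (hfc.comp (hUxs U y))
  -- squeeze lemma for continuity at a point
  have hsq : ∀ (G φ : ((Fin m → ℝ) × ℝ) → ℝ) (p₀ : ((Fin m → ℝ) × ℝ)), Continuous φ → φ p₀ = 0 →
      (∀ p, |G p - G p₀| ≤ φ p) → ContinuousAt G p₀ := by
    intro G φ p₀ hφc hφ0 hle
    rw [ContinuousAt, tendsto_iff_dist_tendsto_zero]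
    refine squeeze_zero (g := φ) (fun p => dist_nonneg) (fun p => ?_) ?_
    · rw [Real.dist_eq]; exact hle p
    · simpa [hφ0] using hφc.tendsto p₀
  -- joint continuity of Gf
  have hG_cont : ∀ U : (BoundedContinuousFunction ((Fin m → ℝ) × ℝ) ℝ), Continuous fun p : ((Fin m → ℝ) × ℝ) => Gf U p.1 p.2 := by
    intro U
    rw [continuous_iff_continuousAt]
    intro p₀
    refine hsq _ (fun p => (1 + γ) * (Kw * ‖p.1 - p₀.1‖)
      + γ * K * Cw * |U (p.1, p.2) - U (p₀.1, p.2)|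
      + |Gf U p₀.1 p.2 - Gf U p₀.1 p₀.2|) p₀ ?_ ?_ ?_
    · refine Continuous.add (Continuous.add ?_ ?_) ?_
      · exact continuous_const.mul (continuous_const.mul (continuous_fst.sub continuous_const).norm)
      · refine continuous_const.mul ?_
        have h1 : Continuous fun p : ((Fin m → ℝ) × ℝ) => U (p.1, p.2) := U.continuous
        have h2 : Continuous fun p : ((Fin m → ℝ) × ℝ) => U (p₀.1, p.2) :=
          U.continuous.comp (continuous_const.prodMk continuous_snd)
        exact (h1.sub h2).abs
      · exact (((hG_cont_s U p₀.1).comp continuous_snd).sub continuous_const).abs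
    · simp
    · intro p
      calc |Gf U p.1 p.2 - Gf U p₀.1 p₀.2|
          ≤ |Gf U p.1 p.2 - Gf U p₀.1 p.2| + |Gf U p₀.1 p.2 - Gf U p₀.1 p₀.2| := abs_sub_le _ _ _
        _ ≤ ((1 + γ) * (Kw * ‖p.1 - p₀.1‖) + γ * K * Cw * |U (p.1, p.2) - U (p₀.1, p.2)|)
            + |Gf U p₀.1 p.2 - Gf U p₀.1 p₀.2| := by
              have := hG_x U p.1 p₀.1 p.2
              linarith
        _ = _ := by ring
  -- the full vector field
  set Ψ : (BoundedContinuousFunction ((Fin m → ℝ) × ℝ) ℝ) → ((Fin m → ℝ) × ℝ) → ℝ := fun U p => -(U p) + Gf U p.1 p.2 with hΨ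
  have hΨ_cont : ∀ U : (BoundedContinuousFunction ((Fin m → ℝ) × ℝ) ℝ), Continuous (Ψ U) := fun U => (U.continuous.neg).add (hG_cont U)
  have hΨ_bdd : ∀ (U : (BoundedContinuousFunction ((Fin m → ℝ) × ℝ) ℝ)) p, |Ψ U p| ≤ ‖U‖ + Cw * (1 + γ) := by
    intro U p
    refine (abs_add_le _ _).trans ?_
    have h1 : |-(U p)| ≤ ‖U‖ := by
      rw [abs_neg]
      simpa [Real.norm_eq_abs] using U.norm_coe_le_norm p
    linarith [hG_bdd U p.1 p.2]
  set c : ℝ := 1 + L * Cw + γ * (L + 2 * K) * Cw with hc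
  have hc0 : 0 ≤ c := by positivity
  have hΨ_lip : ∀ (U V : (BoundedContinuousFunction ((Fin m → ℝ) × ℝ) ℝ)) p, |Ψ U p - Ψ V p| ≤ c * dist U V := by
    intro U V p
    have h1 : Ψ U p - Ψ V p = (V p - U p) + (Gf U p.1 p.2 - Gf V p.1 p.2) := by
      simp only [hΨ]; ring
    rw [h1]
    refine (abs_add_le _ _).trans ?_
    have h2 : |V p - U p| ≤ dist U V := by
      rw [abs_sub_comm]
      simpa [Real.dist_eq] using BoundedContinuousFunction.dist_coe_le_dist (f := U) (g := V) p
    have h3 := hG_UV U V p.1 p.2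
    have hcc : Cw * c₂ + 1 = c := by rw [hc, hc₂]; ring
    have hd0 : (0:ℝ) ≤ dist U V := dist_nonneg
    nlinarith
  -- construction of the Picard operator
  have hΨxc : ∀ (U : (BoundedContinuousFunction ((Fin m → ℝ) × ℝ) ℝ)) x, Continuous fun s => Ψ U (x, s) := fun U x =>
    (hΨ_cont U).comp (continuous_const.prodMk continuous_id)
  have hII : ∀ (U : (BoundedContinuousFunction ((Fin m → ℝ) × ℝ) ℝ)) x a b, IntervalIntegrable (fun s => Ψ U (x, s)) volume a b :=
    fun U x a b => (hΨxc U x).intervalIntegrable _ _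
  have hJcont : ∀ (U : (BoundedContinuousFunction ((Fin m → ℝ) × ℝ) ℝ)) (d : ℝ), Continuous fun x : (Fin m → ℝ) => ∫ s in (0:ℝ)..d, Ψ U (x, s) := by
    intro U d
    apply intervalIntegral.continuous_of_dominated_interval (bound := fun _ => ‖U‖ + Cw * (1 + γ))
    · exact fun x => ((hΨxc U x).aestronglyMeasurable).restrict
    · exact fun x => ae_of_all _ fun s _ => by
        simpa [Real.norm_eq_abs] using hΨ_bdd U (x, s)
    · exact intervalIntegrable_const
    · exact ae_of_all _ fun s _ =>
        (hΨ_cont U).comp (continuous_id.prodMk continuous_const)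
  have hB0 : ∀ U : (BoundedContinuousFunction ((Fin m → ℝ) × ℝ) ℝ), (0:ℝ) ≤ ‖U‖ + Cw * (1 + γ) := fun U => by positivity
  have hInorm : ∀ (U : (BoundedContinuousFunction ((Fin m → ℝ) × ℝ) ℝ)) (x : (Fin m → ℝ)) (a b : ℝ),
      |∫ s in a..b, Ψ U (x, s)| ≤ (‖U‖ + Cw * (1 + γ)) * |b - a| := by
    intro U x a b
    have := intervalIntegral.norm_integral_le_of_norm_le_const
      (C := ‖U‖ + Cw * (1 + γ)) (f := fun s => Ψ U (x, s)) (a := a) (b := b)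
      (fun s _ => by simpa [Real.norm_eq_abs] using hΨ_bdd U (x, s))
    rw [← Real.norm_eq_abs]
    exact this
  have hlip_t : ∀ (U : (BoundedContinuousFunction ((Fin m → ℝ) × ℝ) ℝ)) x t t',
      |(∫ s in (0:ℝ)..(τ t), Ψ U (x, s)) - ∫ s in (0:ℝ)..(τ t'), Ψ U (x, s)|
        ≤ (‖U‖ + Cw * (1 + γ)) * |t - t'| := by
    intro U x t t'
    rw [intervalIntegral.integral_interval_sub_left (hII U x 0 (τ t)) (hII U x 0 (τ t'))]
    refine (hInorm U x (τ t') (τ t)).trans ?_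
    exact mul_le_mul_of_nonneg_left (hτlip t t') (hB0 U)
  have hIcont : ∀ U : (BoundedContinuousFunction ((Fin m → ℝ) × ℝ) ℝ), Continuous fun p : ((Fin m → ℝ) × ℝ) => ∫ s in (0:ℝ)..(τ p.2), Ψ U (p.1, s) := by
    intro U
    rw [continuous_iff_continuousAt]
    intro p₀
    refine hsq _ (fun p => (‖U‖ + Cw * (1 + γ)) * |p.2 - p₀.2|
      + |(∫ s in (0:ℝ)..(τ p₀.2), Ψ U (p.1, s)) - ∫ s in (0:ℝ)..(τ p₀.2), Ψ U (p₀.1, s)|) p₀ ?_ ?_ ?_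
    · refine Continuous.add ?_ ?_
      · exact continuous_const.mul (continuous_snd.sub continuous_const).abs
      · exact (((hJcont U (τ p₀.2)).comp continuous_fst).sub continuous_const).abs
    · simp
    · intro p
      calc |(∫ s in (0:ℝ)..(τ p.2), Ψ U (p.1, s)) - ∫ s in (0:ℝ)..(τ p₀.2), Ψ U (p₀.1, s)|
          ≤ |(∫ s in (0:ℝ)..(τ p.2), Ψ U (p.1, s)) - ∫ s in (0:ℝ)..(τ p₀.2), Ψ U (p.1, s)|
            + |(∫ s in (0:ℝ)..(τ p₀.2), Ψ U (p.1, s)) - ∫ s in (0:ℝ)..(τ p₀.2), Ψ U (p₀.1, s)| :=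
            abs_sub_le _ _ _
        _ ≤ _ := by
            have := hlip_t U p.1 p.2 p₀.2
            beta_reduce
            linarith
  have hΦex : ∀ U : (BoundedContinuousFunction ((Fin m → ℝ) × ℝ) ℝ), ∃ V : (BoundedContinuousFunction ((Fin m → ℝ) × ℝ) ℝ), ∀ p : ((Fin m → ℝ) × ℝ),
      V p = u₀ p.1 + ∫ s in (0:ℝ)..(τ p.2), Ψ U (p.1, s) := by
    intro U
    refine ⟨BoundedContinuousFunction.ofNormedAddCommGroup
      (fun p : ((Fin m → ℝ) × ℝ) => u₀ p.1 + ∫ s in (0:ℝ)..(τ p.2), Ψ U (p.1, s))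
      ((u₀.continuous.comp continuous_fst).add (hIcont U))
      (‖u₀‖ + (‖U‖ + Cw * (1 + γ)) * ρ) ?_, fun p => rfl⟩
    intro p
    rw [Real.norm_eq_abs]
    refine (abs_add_le _ _).trans ?_
    have h1 : |u₀ p.1| ≤ ‖u₀‖ := by
      simpa [Real.norm_eq_abs] using u₀.norm_coe_le_norm p.1
    have h2 : |∫ s in (0:ℝ)..(τ p.2), Ψ U (p.1, s)| ≤ (‖U‖ + Cw * (1 + γ)) * ρ := by
      refine (hInorm U p.1 0 (τ p.2)).trans ?_
      refine mul_le_mul_of_nonneg_left ?_ (hB0 U)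
      rw [sub_zero, abs_of_nonneg (hτ0 p.2)]
      exact hτρ p.2
    linarith
  choose Φ hΦ using hΦex
  -- the contraction
  have hΦdist : ∀ U V : (BoundedContinuousFunction ((Fin m → ℝ) × ℝ) ℝ), dist (Φ U) (Φ V) ≤ (ρ * c) * dist U V := by
    intro U V
    have hd0 : (0:ℝ) ≤ dist U V := dist_nonneg
    refine BoundedContinuousFunction.dist_le (by positivity) |>.2 fun p => ?_
    rw [Real.dist_eq, hΦ U p, hΦ V p]
    have h1 : u₀ p.1 + (∫ s in (0:ℝ)..(τ p.2), Ψ U (p.1, s))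
        - (u₀ p.1 + ∫ s in (0:ℝ)..(τ p.2), Ψ V (p.1, s))
        = ∫ s in (0:ℝ)..(τ p.2), (Ψ U (p.1, s) - Ψ V (p.1, s)) := by
      rw [intervalIntegral.integral_sub (hII U p.1 0 (τ p.2)) (hII V p.1 0 (τ p.2))]
      ring
    rw [h1]
    have h2 := intervalIntegral.norm_integral_le_of_norm_le_const
      (C := c * dist U V) (f := fun s => Ψ U (p.1, s) - Ψ V (p.1, s)) (a := (0:ℝ)) (b := τ p.2)
      (fun s _ => by simpa [Real.norm_eq_abs] using hΨ_lip U V (p.1, s))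
    rw [Real.norm_eq_abs] at h2
    refine h2.trans ?_
    rw [sub_zero, abs_of_nonneg (hτ0 p.2)]
    calc c * dist U V * τ p.2 ≤ c * dist U V * ρ :=
        mul_le_mul_of_nonneg_left (hτρ p.2) (by positivity)
      _ = ρ * c * dist U V := by ring
  have hk0 : (0:ℝ) ≤ ρ * c := by positivity
  set k : NNReal := ⟨ρ * c, hk0⟩ with hk
  have hΦlip : LipschitzWith k Φ := LipschitzWith.of_dist_le_mul fun U V => hΦdist U V
  have hcontr : ContractingWith k Φ := by
    refine ⟨?_, hΦlip⟩
    rw [← NNReal.coe_lt_one]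
    exact hq
  set U : BoundedContinuousFunction ((Fin m → ℝ) × ℝ) ℝ := ContractingWith.fixedPoint Φ hcontr with hU
  have hUfix : Φ U = U := hcontr.fixedPoint_isFixedPt
  have hUeq : ∀ p : ((Fin m → ℝ) × ℝ), U p = u₀ p.1 + ∫ s in (0:ℝ)..(τ p.2), Ψ U (p.1, s) := by
    intro p
    conv_lhs => rw [← hUfix]
    exact hΦ U p
  -- integral equation on [0, ρ]
  have hUieq : ∀ (x : (Fin m → ℝ)), ∀ t ∈ Icc (0:ℝ) ρ,
      U (x, t) = u₀ x + ∫ s in (0:ℝ)..t, Ψ U (x, s) := by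
    intro x t ht
    have := hUeq (x, t)
    rwa [hτeq t ht] at this
  refine ⟨fun x t => U (x, t), ⟨?_, ⟨‖U‖, ?_⟩, ?_, ?_⟩, ?_⟩
  · exact U.continuous.continuousOn
  · intro x t ht
    simpa [Real.norm_eq_abs] using U.norm_coe_le_norm (x, t)
  · intro x
    have := hUeq (x, 0)
    have hτ00 : τ 0 = 0 := hτeq 0 ⟨le_rfl, hρ.le⟩
    rw [hτ00] at this
    simpa using this
  · intro x t ht
    have hFd : HasDerivAt (fun r => u₀ x + ∫ s in (0:ℝ)..r, Ψ U (x, s)) (Ψ U (x, t)) t := by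
      refine HasDerivAt.const_add _ ?_
      exact intervalIntegral.integral_hasDerivAt_right (hII U x 0 t)
        ((hΨxc U x).stronglyMeasurableAtFilter _ _) (hΨxc U x).continuousAt
    have hFdw := hFd.hasDerivWithinAt (s := Icc (0:ℝ) ρ)
    have hcongr : HasDerivWithinAt (fun r => U (x, r)) (Ψ U (x, t)) (Icc (0:ℝ) ρ) t := by
      refine hFdw.congr (fun r hr => ?_) (hUieq x t ht)
      exact hUieq x r hr
    exact hcongr
  · rintro v ⟨hvc, ⟨Mv, hvM⟩, hv0, hvd⟩ x t ht
    have hvx : ∀ x : (Fin m → ℝ), ContinuousOn (v x) (Icc (0:ℝ) ρ) := by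
      intro x
      exact hvc.comp ((continuous_const.prodMk continuous_id).continuousOn)
        (fun r hr => ⟨mem_univ _, hr⟩)
    have hVcont : Continuous fun p : ((Fin m → ℝ) × ℝ) => v p.1 (τ p.2) := by
      exact hvc.comp_continuous (continuous_fst.prodMk (hτcont.comp continuous_snd))
        (fun p => ⟨mem_univ _, hτmem p.2⟩)
    have hVbdd : ∀ p : ((Fin m → ℝ) × ℝ), ‖v p.1 (τ p.2)‖ ≤ Mv := by
      intro p
      rw [Real.norm_eq_abs]
      exact hvM p.1 (τ p.2) (hτmem p.2)
    set V : (BoundedContinuousFunction ((Fin m → ℝ) × ℝ) ℝ) := BoundedContinuousFunction.ofNormedAddCommGroup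
      (fun p : ((Fin m → ℝ) × ℝ) => v p.1 (τ p.2)) hVcont Mv hVbdd with hV
    have hVcoe : ∀ p : ((Fin m → ℝ) × ℝ), V p = v p.1 (τ p.2) := fun p => rfl
    -- V is a fixed point of Φ
    have hVieq : ∀ (x : (Fin m → ℝ)), ∀ r ∈ Icc (0:ℝ) ρ,
        (∫ s in (0:ℝ)..r, Ψ V (x, s)) = v x r - u₀ x := by
      intro x r hr
      have key : (∫ s in (0:ℝ)..r, Ψ V (x, s)) = v x r - v x 0 := by
        refine intervalIntegral.integral_eq_sub_of_hasDeriv_right_of_le hr.1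
          ((hvx x).mono (Icc_subset_Icc le_rfl hr.2)) (fun s hs => ?_) (hII V x 0 r)
        have hsmem : s ∈ Icc (0:ℝ) ρ := ⟨hs.1.le, hs.2.le.trans hr.2⟩
        have hnhds : Icc (0:ℝ) ρ ∈ nhds s :=
          Icc_mem_nhds hs.1 (lt_of_lt_of_le hs.2 hr.2)
        have hda : HasDerivAt (v x)
            (-(v x s) + ∫ y, w x y * (1 + γ * g (v x s - v y s)) * f (v y s)) s :=
          (hvd x s hsmem).hasDerivAt hnhds
        have heq : Ψ V (x, s)
            = -(v x s) + ∫ y, w x y * (1 + γ * g (v x s - v y s)) * f (v y s) := by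
          have hτs : τ s = s := hτeq s hsmem
          simp only [hΨ, hGf, hHf, hVcoe]
          rw [hτs]
        rw [heq]
        exact hda.hasDerivWithinAt
      rw [key, hv0 x]
    have hVfix : Φ V = V := by
      ext p
      rw [hΦ V p, hVcoe p, hVieq p.1 (τ p.2) (hτmem p.2)]
      ring
    have hVU : V = U := hcontr.fixedPoint_unique hVfix
    have hτt : τ t = t := hτeq t ht
    calc v x t = v x (τ t) := by rw [hτt]
      _ = V (x, t) := (hVcoe (x, t)).symm
      _ = U (x, t) := by rw [hVU]
end

section
/- Let w be a synaptic kernel, f and g an activation function and a learning modulation function, and γ ≥ 0. Then for every u_0 ∈ C_b(ℝ^m) there exists a global solution u ∈ C_b(ℝ^m × [0,∞)) of the initial value problem u_t(x,t) = −u(x,t) + ∫_{ℝ^m} w(x,y)[1 + γ g(u(x,t) − u(y,t))] f(u(y,t)) dy, u(x,0) = u_0(x), defined for all t ∈ [0,∞). -/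
/-!
On `C_b(ℝ^m)` the equation reads `u' = -u + S u` with
`S v x = ∫ w x y (1 + γ g (v x - v y)) f (v y) dy`. The `L¹` bounds on `w` and the Lipschitz
bounds on `f` and `g` make `S` a self-map of `C_b(ℝ^m)` that is bounded by `C_w (1 + γ)` and
globally Lipschitz, so the vector field `v ↦ -v + S v` is globally Lipschitz. For a globally
`K`-Lipschitz field, Picard–Lindelöf produces solutions on time intervals of the uniform length
`1 / (2 (K + 1))` from every initial point, and concatenating them gives a solution on `[0, ∞)`.
Finally `eᵗ u t` has derivative `eᵗ S (u t)`, of norm at most `C_w (1 + γ) eᵗ`, which yields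
`‖u t‖ ≤ ‖u₀‖ + C_w (1 + γ)`.
-/

open MeasureTheory Set
open scoped NNReal BoundedContinuousFunction

section GlobalSolution

lemma Nat.floor_div_eq_of_mem_Ico {h t : ℝ} (hh : 0 < h) {n : ℕ}
    (ht : t ∈ Ico (n * h) (n * h + h)) : ⌊t / h⌋₊ = n := by
  rw [Nat.floor_eq_iff (div_nonneg (le_trans (by positivity) ht.1) hh.le), le_div_iff₀ hh,
    div_lt_iff₀ hh, add_mul, one_mul]
  exact ht

lemma mem_Ico_floor_div_mul {h t : ℝ} (hh : 0 < h) (ht : 0 ≤ t) :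
    t ∈ Ico (⌊t / h⌋₊ * h) (⌊t / h⌋₊ * h + h) := by
  have hlt := (div_lt_iff₀ hh).1 (Nat.lt_floor_add_one (t / h))
  exact ⟨(le_div_iff₀ hh).1 (Nat.floor_le (by positivity)), by linarith⟩

lemma eqOn_floor_div_of_apply_eq {E : Type*} {β : ℕ → ℝ → E} {h : ℝ} (hh : 0 < h)
    (hβ : ∀ n : ℕ, β n (n * h + h) = β (n + 1) (n * h + h)) (n : ℕ) :
    EqOn (fun t => β ⌊t / h⌋₊ t) (β n) (Icc (n * h) (n * h + h)) := by
  intro t ht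
  rcases ht.2.lt_or_eq with hlt | rfl
  · simp only [Nat.floor_div_eq_of_mem_Ico hh ⟨ht.1, hlt⟩]
  · have : ⌊(n * h + h) / h⌋₊ = n + 1 :=
      Nat.floor_div_eq_of_mem_Ico hh ⟨by push_cast; linarith, by push_cast; linarith⟩
    simp only [this, hβ]

variable {E : Type*} [NormedAddCommGroup E] [NormedSpace ℝ E]

lemma hasDerivWithinAt_Ici_of_forall_Icc {α φ : ℝ → E} {h : ℝ} (hh : 0 < h)
    (hα : ∀ n : ℕ, ∀ t ∈ Icc (n * h) (n * h + h),
      HasDerivWithinAt α (φ t) (Icc (n * h) (n * h + h)) t)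
    {t : ℝ} (ht : 0 ≤ t) : HasDerivWithinAt α (φ t) (Ici 0) t := by
  obtain ⟨hlo, hhi⟩ := mem_Ico_floor_div_mul hh ht
  set n := ⌊t / h⌋₊
  rcases hlo.lt_or_eq with hlt | heq
  · exact ((hα n t ⟨hlo, hhi.le⟩).hasDerivAt (Icc_mem_nhds hlt hhi)).hasDerivWithinAt
  rcases n with _ | k
  · obtain rfl : t = 0 := by simpa using heq.symm
    exact (hα 0 0 (by simp [hh.le])).mono_of_mem_nhdsWithin (by simpa using Icc_mem_nhdsGE hh)
  · push_cast at heq hhi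
    have hl := hα k t ⟨by linarith, by linarith⟩
    have hr := hα (k + 1) t ⟨by push_cast; linarith, by push_cast; linarith⟩
    refine ((hl.union hr).hasDerivAt (Filter.mem_of_superset (Ioo_mem_nhds (a := k * h)
      (b := t + h) (by linarith) (by linarith)) fun s hs => ?_)).hasDerivWithinAt
    push_cast
    rcases le_total s t with hst | hst
    · exact .inl ⟨hs.1.le, by linarith⟩
    · exact .inr ⟨by linarith, by linarith [hs.2]⟩

theorem norm_le_add_of_hasDerivWithinAt_neg_add {u φ : ℝ → E} {A : ℝ}
    (hu : ∀ t, 0 ≤ t → HasDerivWithinAt u (-u t + φ t) (Ici 0) t)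
    (hφ : ∀ t, 0 ≤ t → ‖φ t‖ ≤ A) {t : ℝ} (ht : 0 ≤ t) : ‖u t‖ ≤ ‖u 0‖ + A := by
  -- integrating factor
  have hv : ∀ s, 0 ≤ s → HasDerivWithinAt (fun s => Real.exp s • u s) (Real.exp s • φ s)
      (Ici 0) s := fun s hs =>
    ((Real.hasDerivAt_exp s).hasDerivWithinAt.smul (hu s hs)).congr_deriv (by module)
  have hB : ∀ s, HasDerivAt (fun s => ‖u 0‖ + A * (Real.exp s - 1)) (A * Real.exp s) s :=
    fun s => by simpa using ((Real.hasDerivAt_exp s).sub_const 1).const_mul A |>.const_add ‖u 0‖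
  have key := image_norm_le_of_norm_deriv_right_le_deriv_boundary (a := 0) (b := t)
    (fun s hs => (hv s hs.1).continuousWithinAt.mono Icc_subset_Ici_self)
    (fun s hs => (hv s hs.1).mono (Ici_subset_Ici.2 hs.1)) (by simp) hB
    (fun s hs => by
      rw [norm_smul, Real.norm_of_nonneg (Real.exp_pos s).le, mul_comm]
      exact mul_le_mul_of_nonneg_right (hφ s hs.1) (Real.exp_pos s).le)
    ⟨ht, le_rfl⟩
  rw [norm_smul, Real.norm_of_nonneg (Real.exp_pos t).le] at key
  have hA : 0 ≤ A := (norm_nonneg _).trans (hφ 0 le_rfl)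
  have h1 := Real.one_le_exp ht
  refine le_of_mul_le_mul_left (key.trans ?_) (Real.exp_pos t)
  nlinarith [norm_nonneg (u 0)]

variable [CompleteSpace E]

theorem exists_hasDerivWithinAt_Icc_of_lipschitzWith {F : E → E} {K : ℝ≥0}
    (hF : LipschitzWith K F) {h : ℝ} (h0 : 0 ≤ h) (hKh : K * h ≤ 2⁻¹) (t₀ : ℝ) (x₀ : E) :
    ∃ α : ℝ → E, α t₀ = x₀ ∧
      ∀ t ∈ Icc t₀ (t₀ + h), HasDerivWithinAt α (F (α t)) (Icc t₀ (t₀ + h)) t := by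
  -- on the ball of radius `a = 2 ‖F x₀‖ h` the field is bounded by `‖F x₀‖ + K a ≤ a / h`,
  -- so the admissible time step does not depend on `x₀`
  let a : ℝ≥0 := ⟨2 * ‖F x₀‖ * h, by positivity⟩
  have ha : (a : ℝ) = 2 * ‖F x₀‖ * h := rfl
  have hPL : IsPicardLindelof (fun _ => F) (tmin := t₀) (tmax := t₀ + h)
      ⟨t₀, left_mem_Icc.2 (by linarith)⟩ x₀ a 0 (‖F x₀‖₊ + K * a) K := by
    refine .of_time_independent (fun x hx => ?_) hF.lipschitzOnWith ?_
    · calc ‖F x‖ ≤ ‖F x₀‖ + ‖F x - F x₀‖ := norm_le_norm_add_norm_sub' _ _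
        _ ≤ ‖F x₀‖ + K * a := by
          gcongr
          exact hF.norm_sub_le_of_le (mem_closedBall_iff_norm.1 hx)
    · simp only [add_sub_cancel_left, sub_self, max_eq_left h0, NNReal.coe_zero, sub_zero]
      push_cast
      rw [ha]
      nlinarith [norm_nonneg (F x₀)]
  exact hPL.exists_eq_forall_mem_Icc_hasDerivWithinAt₀

theorem exists_forall_hasDerivWithinAt_Ici_of_lipschitzWith {F : E → E} {K : ℝ≥0}
    (hF : LipschitzWith K F) (x₀ : E) :
    ∃ α : ℝ → E, α 0 = x₀ ∧ ∀ t, 0 ≤ t → HasDerivWithinAt α (F (α t)) (Ici 0) t := by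
  set h : ℝ := (2 * (K + 1))⁻¹
  have hh : 0 < h := by positivity
  have hKh : K * h ≤ 2⁻¹ := by
    rw [mul_inv_le_iff₀ (by positivity)]
    linarith
  choose step hstep₀ hstep using exists_hasDerivWithinAt_Icc_of_lipschitzWith hF hh.le hKh
  let node : ℕ → E := fun n => Nat.rec x₀ (fun k x => step (k * h) x (k * h + h)) n
  let piece (n : ℕ) : ℝ → E := step (n * h) (node n)
  have hpiece : ∀ n : ℕ, piece n (n * h + h) = piece (n + 1) (n * h + h) := fun n => by
    simp only [piece, Nat.cast_succ, add_mul, one_mul, hstep₀]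
    rfl
  refine ⟨fun t => piece ⌊t / h⌋₊ t, by simp [piece, node, hstep₀], fun t ht =>
    hasDerivWithinAt_Ici_of_forall_Icc (φ := fun s => F (piece ⌊s / h⌋₊ s)) hh
      (fun n s hs => ?_) ht⟩
  have heq := eqOn_floor_div_of_apply_eq hh hpiece n
  rw [show piece ⌊s / h⌋₊ s = piece n s from heq hs]
  exact (hstep _ _ s hs).congr heq (heq hs)

end GlobalSolution

section SynapticInput

variable {X : Type*} [MeasurableSpace X] {μ : Measure X}

lemma abs_integral_mul_le_of_abs_le_s7 {W b : X → ℝ} (hW : Integrable W μ) {c : ℝ}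
    (hbc : ∀ y, |b y| ≤ c) : |∫ y, W y * b y ∂μ| ≤ (∫ y, |W y| ∂μ) * c := by
  rw [← Real.norm_eq_abs, ← integral_mul_const]
  refine norm_integral_le_of_norm_le (hW.abs.mul_const c) (ae_of_all _ fun y => ?_)
  rw [Real.norm_eq_abs, abs_mul]
  exact mul_le_mul_of_nonneg_left (hbc y) (abs_nonneg _)

lemma MeasureTheory.Integrable.mul_of_abs_le {W b : X → ℝ} (hW : Integrable W μ)
    (hb : AEStronglyMeasurable b μ) {c : ℝ} (hbc : ∀ y, |b y| ≤ c) :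
    Integrable (fun y => W y * b y) μ :=
  hW.mul_bdd hb (ae_of_all _ fun y => (Real.norm_eq_abs _).trans_le (hbc y))

variable {f g : ℝ → ℝ} {γ : ℝ} {Kf Kg : ℝ≥0}

def modulatedRate (f g : ℝ → ℝ) (γ a b : ℝ) : ℝ := (1 + γ * g (a - b)) * f b

lemma abs_one_add_mul_le (hg : ∀ s, 0 ≤ g s ∧ g s ≤ 1) (hγ : 0 ≤ γ) (s : ℝ) :
    |1 + γ * g s| ≤ 1 + γ := by
  have := mul_le_mul_of_nonneg_left (hg s).2 hγ
  rw [abs_of_nonneg (by nlinarith [mul_nonneg hγ (hg s).1])]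
  linarith

lemma abs_modulatedRate_le (hf : ∀ s, 0 ≤ f s ∧ f s ≤ 1) (hg : ∀ s, 0 ≤ g s ∧ g s ≤ 1)
    (hγ : 0 ≤ γ) (a b : ℝ) : |modulatedRate f g γ a b| ≤ 1 + γ := by
  rw [modulatedRate, abs_mul]
  simpa using mul_le_mul (abs_one_add_mul_le hg hγ _)
    ((abs_of_nonneg (hf b).1).trans_le (hf b).2) (abs_nonneg _) (by linarith)

lemma abs_modulatedRate_sub_left_le (hf01 : ∀ s, 0 ≤ f s ∧ f s ≤ 1) (hg : LipschitzWith Kg g)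
    (hγ : 0 ≤ γ) (a a' b : ℝ) :
    |modulatedRate f g γ a b - modulatedRate f g γ a' b| ≤ γ * (Kg * |a - a'|) := by
  have hg_lip : |g (a - b) - g (a' - b)| ≤ Kg * |a - a'| := by
    simpa only [Real.dist_eq, sub_sub_sub_cancel_right] using hg.dist_le_mul (a - b) (a' - b)
  rw [show modulatedRate f g γ a b - modulatedRate f g γ a' b =
      γ * ((g (a - b) - g (a' - b)) * f b) by simp only [modulatedRate]; ring,
    abs_mul, abs_of_nonneg hγ, abs_mul]
  refine mul_le_mul_of_nonneg_left ?_ hγ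
  simpa using mul_le_mul hg_lip ((abs_of_nonneg (hf01 b).1).trans_le (hf01 b).2)
    (abs_nonneg _) (by positivity)

lemma abs_modulatedRate_sub_right_le (hf : LipschitzWith Kf f) (hf01 : ∀ s, 0 ≤ f s ∧ f s ≤ 1)
    (hg : LipschitzWith Kg g) (hg01 : ∀ s, 0 ≤ g s ∧ g s ≤ 1) (hγ : 0 ≤ γ) (a b b' : ℝ) :
    |modulatedRate f g γ a b - modulatedRate f g γ a b'| ≤
      ((1 + γ) * Kf + γ * Kg) * |b - b'| := by
  have hf_lip : |f b - f b'| ≤ Kf * |b - b'| := by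
    simpa only [Real.dist_eq] using hf.dist_le_mul b b'
  have hg_lip : |g (a - b) - g (a - b')| ≤ Kg * |b - b'| := by
    simpa only [Real.dist_eq, sub_sub_sub_cancel_left, abs_sub_comm b'] using
      hg.dist_le_mul (a - b) (a - b')
  have hsplit : modulatedRate f g γ a b - modulatedRate f g γ a b' =
      (1 + γ * g (a - b)) * (f b - f b') + γ * ((g (a - b) - g (a - b')) * f b') := by
    simp only [modulatedRate]; ring
  rw [hsplit]
  refine (abs_add_le _ _).trans (le_of_le_of_eq (add_le_add ?_ ?_)
    (by ring : (1 + γ) * (Kf * |b - b'|) + γ * (Kg * |b - b'|) = _)) <;> rw [abs_mul]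
  · exact mul_le_mul (abs_one_add_mul_le hg01 hγ _) hf_lip (abs_nonneg _) (by linarith)
  · rw [abs_of_nonneg hγ, abs_mul]
    refine mul_le_mul_of_nonneg_left ?_ hγ
    simpa using mul_le_mul hg_lip ((abs_of_nonneg (hf01 b').1).trans_le (hf01 b').2)
      (abs_nonneg _) (by positivity)

variable {w : X → X → ℝ} {Cw Kw : ℝ}

noncomputable def synapticInput (μ : Measure X) (w : X → X → ℝ) (f g : ℝ → ℝ) (γ : ℝ)
    (v : X → ℝ) (x : X) : ℝ :=
  ∫ y, w x y * (1 + γ * g (v x - v y)) * f (v y) ∂μ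

lemma synapticInput_eq (v : X → ℝ) (x : X) :
    synapticInput μ w f g γ v x = ∫ y, w x y * modulatedRate f g γ (v x) (v y) ∂μ := by
  simp only [synapticInput, modulatedRate, mul_assoc]

lemma aestronglyMeasurable_modulatedRate [TopologicalSpace X] [OpensMeasurableSpace X]
    (hf : Continuous f) (hg : Continuous g) {v : X → ℝ} (hv : Continuous v) (a : ℝ) :
    AEStronglyMeasurable (fun y => modulatedRate f g γ a (v y)) μ := by
  unfold modulatedRate
  exact Continuous.aestronglyMeasurable (by fun_prop)

lemma abs_synapticInput_le (hw_int : ∀ x, Integrable (w x) μ)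
    (hw_L1 : ∀ x, ∫ y, |w x y| ∂μ ≤ Cw) (hf01 : ∀ s, 0 ≤ f s ∧ f s ≤ 1)
    (hg01 : ∀ s, 0 ≤ g s ∧ g s ≤ 1) (hγ : 0 ≤ γ) (v : X → ℝ) (x : X) :
    |synapticInput μ w f g γ v x| ≤ Cw * (1 + γ) := by
  rw [synapticInput_eq]
  exact (abs_integral_mul_le_of_abs_le_s7 (hw_int x)
    fun y => abs_modulatedRate_le hf01 hg01 hγ _ _).trans
      (mul_le_mul_of_nonneg_right (hw_L1 x) (by linarith))

variable [PseudoMetricSpace X] [OpensMeasurableSpace X]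

lemma abs_synapticInput_sub_le (hw_int : ∀ x, Integrable (w x) μ)
    (hw_L1 : ∀ x, ∫ y, |w x y| ∂μ ≤ Cw) (hf : LipschitzWith Kf f)
    (hf01 : ∀ s, 0 ≤ f s ∧ f s ≤ 1) (hg : LipschitzWith Kg g) (hg01 : ∀ s, 0 ≤ g s ∧ g s ≤ 1)
    (hγ : 0 ≤ γ) {v v' : X → ℝ}
    (hv : Continuous v) (hv' : Continuous v') {d : ℝ} (hd : ∀ y, |v y - v' y| ≤ d) (x : X) :
    |synapticInput μ w f g γ v x - synapticInput μ w f g γ v' x| ≤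
      Cw * (((1 + γ) * Kf + 2 * γ * Kg) * d) := by
  have hrate : ∀ y, |modulatedRate f g γ (v x) (v y) - modulatedRate f g γ (v' x) (v' y)| ≤
      ((1 + γ) * Kf + 2 * γ * Kg) * d := fun y => by
    refine (abs_sub_le _ (modulatedRate f g γ (v' x) (v y)) _).trans
      (le_of_le_of_eq (add_le_add ?_ ?_)
        (by ring : γ * (Kg * d) + ((1 + γ) * Kf + γ * Kg) * d = _))
    · exact (abs_modulatedRate_sub_left_le hf01 hg hγ _ _ _).trans
        (mul_le_mul_of_nonneg_left (mul_le_mul_of_nonneg_left (hd x) Kg.2) hγ)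
    · exact (abs_modulatedRate_sub_right_le hf hf01 hg hg01 hγ _ _ _).trans
        (mul_le_mul_of_nonneg_left (hd y) (by positivity))
  have hint : ∀ {u : X → ℝ}, Continuous u →
      Integrable (fun y => w x y * modulatedRate f g γ (u x) (u y)) μ := fun hu =>
    (hw_int x).mul_of_abs_le (aestronglyMeasurable_modulatedRate hf.continuous hg.continuous hu _)
      fun y => abs_modulatedRate_le hf01 hg01 hγ _ _
  rw [synapticInput_eq, synapticInput_eq, ← integral_sub (hint hv) (hint hv')]
  simp_rw [← mul_sub]
  exact (abs_integral_mul_le_of_abs_le_s7 (hw_int x) hrate).trans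
    (mul_le_mul_of_nonneg_right (hw_L1 x) ((abs_nonneg _).trans (hrate x)))

lemma abs_synapticInput_apply_sub_le (hw_int : ∀ x, Integrable (w x) μ)
    (hw_L1 : ∀ x, ∫ y, |w x y| ∂μ ≤ Cw)
    (hw_lip : ∀ x x', ∫ y, |w x y - w x' y| ∂μ ≤ Kw * dist x x')
    (hf : Continuous f) (hf01 : ∀ s, 0 ≤ f s ∧ f s ≤ 1) (hg : LipschitzWith Kg g)
    (hg01 : ∀ s, 0 ≤ g s ∧ g s ≤ 1) (hγ : 0 ≤ γ) {v : X → ℝ} (hv : Continuous v) (x x' : X) :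
    |synapticInput μ w f g γ v x - synapticInput μ w f g γ v x'| ≤
      (1 + γ) * (Kw * dist x x') + Cw * (γ * (Kg * |v x - v x'|)) := by
  set r := fun z y => modulatedRate f g γ (v z) (v y)
  have hr : ∀ z, AEStronglyMeasurable (r z) μ :=
    fun z => aestronglyMeasurable_modulatedRate hf hg.continuous hv _
  have hr_le : ∀ z y, |r z y| ≤ 1 + γ := fun z y => abs_modulatedRate_le hf01 hg01 hγ _ _
  have hsplit : synapticInput μ w f g γ v x - synapticInput μ w f g γ v x' =
      (∫ y, (w x y - w x' y) * r x y ∂μ) + ∫ y, w x' y * (r x y - r x' y) ∂μ := by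
    have hint : ∀ z, Integrable (fun y => w z y * r z y) μ :=
      fun z => (hw_int z).mul_of_abs_le (hr z) (hr_le z)
    have hint₁ : Integrable (fun y => (w x y - w x' y) * r x y) μ :=
      ((hw_int x).sub (hw_int x')).mul_of_abs_le (hr x) (hr_le x)
    have hint₂ : Integrable (fun y => w x' y * (r x y - r x' y)) μ :=
      (hw_int x').mul_of_abs_le ((hr x).sub (hr x'))
        fun y => abs_modulatedRate_sub_left_le hf01 hg hγ _ _ _
    rw [synapticInput_eq, synapticInput_eq, ← integral_sub (hint x) (hint x'),
      ← integral_add hint₁ hint₂]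
    congr 1 with y
    ring
  rw [hsplit]
  refine (abs_add_le _ _).trans (add_le_add ?_ ?_)
  · rw [mul_comm]
    exact (abs_integral_mul_le_of_abs_le_s7 ((hw_int x).sub (hw_int x')) (hr_le x)).trans
      (mul_le_mul_of_nonneg_right (hw_lip x x') (by linarith))
  · exact (abs_integral_mul_le_of_abs_le_s7 (hw_int x')
      fun y => abs_modulatedRate_sub_left_le hf01 hg hγ _ _ _).trans
      (mul_le_mul_of_nonneg_right (hw_L1 x') (by positivity))

lemma continuous_synapticInput (hw_int : ∀ x, Integrable (w x) μ)
    (hw_L1 : ∀ x, ∫ y, |w x y| ∂μ ≤ Cw)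
    (hw_lip : ∀ x x', ∫ y, |w x y - w x' y| ∂μ ≤ Kw * dist x x')
    (hf : Continuous f) (hf01 : ∀ s, 0 ≤ f s ∧ f s ≤ 1) (hg : LipschitzWith Kg g)
    (hg01 : ∀ s, 0 ≤ g s ∧ g s ≤ 1) (hγ : 0 ≤ γ) {v : X → ℝ} (hv : Continuous v) :
    Continuous (synapticInput μ w f g γ v) := by
  refine continuous_iff_continuousAt.2 fun x₀ => tendsto_iff_dist_tendsto_zero.2 ?_
  have hbound : Continuous fun x =>
      (1 + γ) * (Kw * dist x x₀) + Cw * (γ * (Kg * |v x - v x₀|)) := by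
    fun_prop
  refine squeeze_zero (fun x => dist_nonneg) (fun x => ?_) (by simpa using hbound.tendsto x₀)
  rw [Real.dist_eq]
  exact abs_synapticInput_apply_sub_le hw_int hw_L1 hw_lip hf hf01 hg hg01 hγ hv x x₀

theorem exists_lipschitzWith_synapticInput (hCw : 0 ≤ Cw) (hw_int : ∀ x, Integrable (w x) μ)
    (hw_L1 : ∀ x, ∫ y, |w x y| ∂μ ≤ Cw)
    (hw_lip : ∀ x x', ∫ y, |w x y - w x' y| ∂μ ≤ Kw * dist x x')
    (hf : LipschitzWith Kf f) (hf01 : ∀ s, 0 ≤ f s ∧ f s ≤ 1)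
    (hg : LipschitzWith Kg g) (hg01 : ∀ s, 0 ≤ g s ∧ g s ≤ 1) (hγ : 0 ≤ γ) :
    ∃ (S : (X →ᵇ ℝ) → (X →ᵇ ℝ)) (K : ℝ≥0), LipschitzWith K S ∧
      (∀ v, ‖S v‖ ≤ Cw * (1 + γ)) ∧ ∀ v x, S v x = synapticInput μ w f g γ v x := by
  have hA : 0 ≤ Cw * (1 + γ) := by positivity
  refine ⟨fun v => .ofNormedAddCommGroup _ (continuous_synapticInput hw_int hw_L1 hw_lip
      hf.continuous hf01 hg hg01 hγ v.continuous) _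
      fun x => abs_synapticInput_le hw_int hw_L1 hf01 hg01 hγ v x,
    (Cw * ((1 + γ) * Kf + 2 * γ * Kg)).toNNReal, .of_dist_le_mul fun v v' =>
      (BoundedContinuousFunction.dist_le (mul_nonneg (NNReal.coe_nonneg _) dist_nonneg)).2
        fun x => ?_,
    fun v => BoundedContinuousFunction.norm_ofNormedAddCommGroup_le _ hA _, fun v x => rfl⟩
  rw [Real.dist_eq, Real.coe_toNNReal _ (by positivity), mul_assoc]
  exact abs_synapticInput_sub_le hw_int hw_L1 hf hf01 hg hg01 hγ v.continuous v'.continuous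
    (fun y => (Real.dist_eq _ _).symm.trans_le (v.dist_coe_le_dist y)) x

end SynapticInput

lemma exists_lipschitzWith_of_abs_deriv_le {f : ℝ → ℝ} (hf : Differentiable ℝ f)
    (hB : ∃ B, ∀ s, |deriv f s| ≤ B) : ∃ K, LipschitzWith K f := by
  obtain ⟨B, hB⟩ := hB
  refine ⟨B.toNNReal, lipschitzWith_of_nnnorm_deriv_le hf fun s => ?_⟩
  rw [← NNReal.coe_le_coe, coe_nnnorm, Real.norm_eq_abs]
  exact (hB s).trans (Real.le_coe_toNNReal B)

theorem stmt_7_general {m : ℕ}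
    (w : (Fin m → ℝ) → (Fin m → ℝ) → ℝ)
    (Cw Kw : ℝ) (hCw : 0 < Cw)
    (hw_int : ∀ x, Integrable fun y => w x y)
    (hw_L1 : ∀ x, (∫ y, |w x y|) ≤ Cw)
    (hw_lip : ∀ x x', (∫ y, |w x y - w x' y|) ≤ Kw * ‖x - x'‖)
    (f g : ℝ → ℝ)
    (hf_smooth : ContDiff ℝ 1 f) (hf_deriv : ∃ B, ∀ s, |deriv f s| ≤ B)
    (hf_range : ∀ s, 0 ≤ f s ∧ f s ≤ 1)
    (hg_smooth : ContDiff ℝ 1 g) (hg_deriv : ∃ B, ∀ s, |deriv g s| ≤ B)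
    (hg_range : ∀ s, 0 ≤ g s ∧ g s ≤ 1)
    (γ : ℝ) (hγ : 0 ≤ γ)
    (u₀ : BoundedContinuousFunction (Fin m → ℝ) ℝ) :
    ∃ u : (Fin m → ℝ) → ℝ → ℝ,
      ContinuousOn (fun p : (Fin m → ℝ) × ℝ => u p.1 p.2) (univ ×ˢ Ici 0) ∧
      (∃ M, ∀ (x : Fin m → ℝ), ∀ t ∈ Ici (0:ℝ), |u x t| ≤ M) ∧
      (∀ x, u x 0 = u₀ x) ∧
      (∀ (x : Fin m → ℝ), ∀ t ∈ Ici (0:ℝ),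
        HasDerivWithinAt (u x)
          (-(u x t) + ∫ y, w x y * (1 + γ * g (u x t - u y t)) * f (u y t))
          (Ici 0) t) := by
  obtain ⟨Kf, hf⟩ :=
    exists_lipschitzWith_of_abs_deriv_le (hf_smooth.differentiable one_ne_zero) hf_deriv
  obtain ⟨Kg, hg⟩ :=
    exists_lipschitzWith_of_abs_deriv_le (hg_smooth.differentiable one_ne_zero) hg_deriv
  obtain ⟨S, K, hS, hS_le, hS_apply⟩ := exists_lipschitzWith_synapticInput hCw.le hw_int hw_L1
    (fun x x' => (hw_lip x x').trans_eq (by rw [dist_eq_norm])) hf hf_range hg hg_range hγ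
  obtain ⟨U, hU₀, hU⟩ := exists_forall_hasDerivWithinAt_Ici_of_lipschitzWith
    (LipschitzWith.id.neg.add hS) u₀
  have hU : ∀ t, 0 ≤ t → HasDerivWithinAt U (-U t + S (U t)) (Ici 0) t := hU
  refine ⟨fun x t => U t x, ?_, ⟨‖u₀‖ + Cw * (1 + γ), fun x t ht => ?_⟩, fun x => by simp [hU₀],
    fun x t ht => ?_⟩
  · have hUc : ContinuousOn U (Ici 0) := fun t ht => (hU t ht).continuousWithinAt
    exact continuous_eval.comp_continuousOn
      ((hUc.comp continuous_snd.continuousOn fun p hp => hp.2).prodMk continuous_fst.continuousOn)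
  · calc |U t x| ≤ ‖U t‖ := (Real.norm_eq_abs _).symm.trans_le ((U t).norm_coe_le_norm x)
      _ ≤ ‖u₀‖ + Cw * (1 + γ) :=
        hU₀ ▸ norm_le_add_of_hasDerivWithinAt_neg_add hU (fun t _ => hS_le (U t)) ht
  · have hD := (BoundedContinuousFunction.evalCLM ℝ x).hasFDerivAt.comp_hasDerivWithinAt t
      (hU t ht)
    simp only [BoundedContinuousFunction.evalCLM_apply, BoundedContinuousFunction.coe_add,
      BoundedContinuousFunction.coe_neg, Pi.add_apply, Pi.neg_apply, hS_apply,
      synapticInput] at hD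
    exact hD

/-- Global existence: for every `u₀ ∈ C_b(ℝ^m)` there is a bounded
continuous global solution `u ∈ C_b(ℝ^m × [0,∞))` of the plastic neural field IVP
`uₜ(x,t) = -u(x,t) + ∫ w x y (1 + γ g(u x t - u y t)) f(u y t) dy`, `u(x,0) = u₀(x)`. -/
theorem stmt_7 {m : ℕ} (hm : 1 ≤ m)
    (w : (Fin m → ℝ) → (Fin m → ℝ) → ℝ)
    (Cinf Cw Kw : ℝ) (hCw : 0 < Cw) (hKw : 0 < Kw)
    (hw_meas : Measurable (Function.uncurry w))
    (hw_bdd : ∀ x y, |w x y| ≤ Cinf)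
    (hw_int : ∀ x, Integrable fun y => w x y)
    (hw_L1 : ∀ x, (∫ y, |w x y|) ≤ Cw)
    (hw_lip : ∀ x x', (∫ y, |w x y - w x' y|) ≤ Kw * ‖x - x'‖)
    (f g : ℝ → ℝ)
    (hf_smooth : ContDiff ℝ 1 f) (hf_deriv : ∃ B, ∀ s, |deriv f s| ≤ B)
    (hf_range : ∀ s, 0 ≤ f s ∧ f s ≤ 1)
    (hg_smooth : ContDiff ℝ 1 g) (hg_deriv : ∃ B, ∀ s, |deriv g s| ≤ B)
    (hg_range : ∀ s, 0 ≤ g s ∧ g s ≤ 1)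
    (γ : ℝ) (hγ : 0 ≤ γ)
    (u₀ : BoundedContinuousFunction (Fin m → ℝ) ℝ) :
    ∃ u : (Fin m → ℝ) → ℝ → ℝ,
      ContinuousOn (fun p : (Fin m → ℝ) × ℝ => u p.1 p.2) (univ ×ˢ Ici 0) ∧
      (∃ M, ∀ (x : Fin m → ℝ), ∀ t ∈ Ici (0:ℝ), |u x t| ≤ M) ∧
      (∀ x, u x 0 = u₀ x) ∧
      (∀ (x : Fin m → ℝ), ∀ t ∈ Ici (0:ℝ),
        HasDerivWithinAt (u x)
          (-(u x t) + ∫ y, w x y * (1 + γ * g (u x t - u y t)) * f (u y t))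
          (Ici 0) t) :=
  stmt_7_general w Cw Kw hCw hw_int hw_L1 hw_lip f g hf_smooth hf_deriv hf_range hg_smooth hg_deriv
    hg_range γ hγ u₀
end

section
/- Let w be a synaptic kernel with sup_{x∈ℝ^m} ∫_{ℝ^m} |w(x,y)| dy ≤ C_w, let f, g be an activation function and a learning modulation function with Lipschitz constants L and K, and let γ ≥ 0 be fixed. For every ρ > 0 with q := ρ[1 + L C_w + γ(L + 2K) C_w] < 1, if u and v are solutions on ℝ^m × [0,ρ] of the initial value problem u_t(x,t) = −u(x,t) + ∫_{ℝ^m} w(x,y)[1 + γ g(u(x,t) − u(y,t))] f(u(y,t)) dy with initial data u_0 and v_0 in C_b(ℝ^m) respectively, then ‖u − v‖_ρ ≤ (1/(1 − q)) ‖u_0 − v_0‖_{C_b(ℝ^m)}. -/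
open MeasureTheory Set

/-- Continuous dependence on initial data: if
`q = ρ [1 + L C_w + γ (L + 2K) C_w] < 1` and `u`, `v` are solutions of the plastic
neural field equation on `ℝ^m × [0,ρ]` with initial data `u₀`, `v₀ ∈ C_b(ℝ^m)`, then
`‖u - v‖_ρ ≤ (1/(1-q)) ‖u₀ - v₀‖`. -/
theorem stmt_8 {m : ℕ} (hm : 1 ≤ m)
    (w : (Fin m → ℝ) → (Fin m → ℝ) → ℝ)
    (Cinf Cw Kw : ℝ) (hCw : 0 < Cw) (hKw : 0 < Kw)
    (hw_meas : Measurable (Function.uncurry w))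
    (hw_bdd : ∀ x y, |w x y| ≤ Cinf)
    (hw_int : ∀ x, Integrable fun y => w x y)
    (hw_L1 : ∀ x, (∫ y, |w x y|) ≤ Cw)
    (hw_lip : ∀ x x', (∫ y, |w x y - w x' y|) ≤ Kw * ‖x - x'‖)
    (f g : ℝ → ℝ)
    (hf_smooth : ContDiff ℝ 1 f) (hf_deriv : ∃ B, ∀ s, |deriv f s| ≤ B)
    (hf_range : ∀ s, 0 ≤ f s ∧ f s ≤ 1)
    (hg_smooth : ContDiff ℝ 1 g) (hg_deriv : ∃ B, ∀ s, |deriv g s| ≤ B)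
    (hg_range : ∀ s, 0 ≤ g s ∧ g s ≤ 1)
    (L K : ℝ) (hL : 0 ≤ L) (hK : 0 ≤ K)
    (hf_lip : ∀ a b, |f a - f b| ≤ L * |a - b|)
    (hg_lip : ∀ a b, |g a - g b| ≤ K * |a - b|)
    (γ : ℝ) (hγ : 0 ≤ γ)
    (ρ : ℝ) (hρ : 0 < ρ)
    (q : ℝ) (hqdef : q = ρ * (1 + L * Cw + γ * (L + 2 * K) * Cw)) (hq : q < 1)
    (u₀ v₀ : BoundedContinuousFunction (Fin m → ℝ) ℝ)
    (u v : (Fin m → ℝ) → ℝ → ℝ)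
    (hu_meas : Measurable (Function.uncurry u))
    (hv_meas : Measurable (Function.uncurry v))
    (hu_cont : ContinuousOn (fun p : (Fin m → ℝ) × ℝ => u p.1 p.2) (univ ×ˢ Icc 0 ρ))
    (hv_cont : ContinuousOn (fun p : (Fin m → ℝ) × ℝ => v p.1 p.2) (univ ×ˢ Icc 0 ρ))
    (hu_bdd : ∃ M, ∀ (x : Fin m → ℝ), ∀ t ∈ Icc (0:ℝ) ρ, |u x t| ≤ M)
    (hv_bdd : ∃ M, ∀ (x : Fin m → ℝ), ∀ t ∈ Icc (0:ℝ) ρ, |v x t| ≤ M)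
    (hu_init : ∀ x, u x 0 = u₀ x)
    (hv_init : ∀ x, v x 0 = v₀ x)
    (hu_sol : ∀ (x : Fin m → ℝ), ∀ t ∈ Icc (0:ℝ) ρ,
      HasDerivWithinAt (u x)
        (-(u x t) + ∫ y, w x y * (1 + γ * g (u x t - u y t)) * f (u y t))
        (Icc 0 ρ) t)
    (hv_sol : ∀ (x : Fin m → ℝ), ∀ t ∈ Icc (0:ℝ) ρ,
      HasDerivWithinAt (v x)
        (-(v x t) + ∫ y, w x y * (1 + γ * g (v x t - v y t)) * f (v y t))
        (Icc 0 ρ) t) :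
    ∀ (x : Fin m → ℝ), ∀ t ∈ Icc (0:ℝ) ρ,
      |u x t - v x t| ≤ (1 / (1 - q)) * ‖u₀ - v₀‖ := by
  obtain ⟨M₁, hM₁⟩ := hu_bdd
  obtain ⟨M₂, hM₂⟩ := hv_bdd
  set c' : ℝ := L + γ * (L + 2 * K) with hc'def
  have hc' : 0 ≤ c' := by positivity
  set S : Set ℝ := {d | ∃ x, ∃ t ∈ Icc (0:ℝ) ρ, d = |u x t - v x t|} with hSdef
  have h0mem : (0:ℝ) ∈ Icc (0:ℝ) ρ := ⟨le_refl 0, hρ.le⟩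
  have hS_ne : S.Nonempty := ⟨|u 0 0 - v 0 0|, 0, 0, h0mem, rfl⟩
  have hS_bdd : BddAbove S := by
    refine ⟨M₁ + M₂, ?_⟩
    rintro d ⟨x, t, ht, rfl⟩
    calc |u x t - v x t| ≤ |u x t| + |v x t| := abs_sub _ _
      _ ≤ M₁ + M₂ := add_le_add (hM₁ x t ht) (hM₂ x t ht)
  set D : ℝ := sSup S with hDdef
  have hD_ge : ∀ x, ∀ t ∈ Icc (0:ℝ) ρ, |u x t - v x t| ≤ D :=
    fun x t ht => le_csSup hS_bdd ⟨x, t, ht, rfl⟩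
  have hD0 : 0 ≤ D := le_trans (abs_nonneg _) (hD_ge 0 0 h0mem)
  have hfc : Continuous f := hf_smooth.continuous
  have hgc : Continuous g := hg_smooth.continuous
  -- integrability of the nonlinear terms
  have hInt : ∀ (z : (Fin m → ℝ) → ℝ → ℝ), Measurable (Function.uncurry z) →
      ∀ x, ∀ s : ℝ, Integrable (fun y => w x y * (1 + γ * g (z x s - z y s)) * f (z y s)) := by
    intro z hz x s
    have hzs : Measurable (fun y => z y s) :=
      hz.comp (measurable_id.prodMk measurable_const)
    have hmeasA : Measurable (fun y => w x y * (1 + γ * g (z x s - z y s)) * f (z y s)) := by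
      exact ((hw_meas.of_uncurry_left).mul
        (measurable_const.add (measurable_const.mul
          (hgc.measurable.comp (measurable_const.sub hzs))))).mul
        (hfc.measurable.comp hzs)
    refine Integrable.mono ((hw_int x).abs.const_mul (1 + γ))
      hmeasA.aestronglyMeasurable (ae_of_all _ fun y => ?_)
    have h1 : 0 ≤ g (z x s - z y s) := (hg_range _).1
    have h2 : g (z x s - z y s) ≤ 1 := (hg_range _).2
    have h3 : 0 ≤ f (z y s) := (hf_range _).1
    have h4 : f (z y s) ≤ 1 := (hf_range _).2
    simp only [Real.norm_eq_abs, abs_mul, abs_abs]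
    have e1 : |1 + γ * g (z x s - z y s)| ≤ 1 + γ := by
      rw [abs_of_nonneg (by nlinarith)]; nlinarith
    have e2 : |f (z y s)| ≤ 1 := by rw [abs_of_nonneg h3]; exact h4
    calc |w x y| * |1 + γ * g (z x s - z y s)| * |f (z y s)|
        ≤ |w x y| * (1 + γ) * 1 := by
          apply mul_le_mul (mul_le_mul le_rfl e1 (abs_nonneg _) (abs_nonneg _)) e2
            (abs_nonneg _) (by positivity)
      _ = |1 + γ| * |w x y| := by
          rw [abs_of_nonneg (by linarith : (0:ℝ) ≤ 1 + γ)]; ring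
  -- key estimate
  have key : ∀ x, ∀ t ∈ Icc (0:ℝ) ρ, |u x t - v x t| ≤ ‖u₀ - v₀‖ + q * D := by
    intro x t ht
    set h : ℝ → ℝ := fun s => u x s - v x s with hhdef
    set h' : ℝ → ℝ := fun s =>
      (-(u x s) + ∫ y, w x y * (1 + γ * g (u x s - u y s)) * f (u y s)) -
      (-(v x s) + ∫ y, w x y * (1 + γ * g (v x s - v y s)) * f (v y s)) with hh'def
    have hderiv : ∀ s ∈ Icc (0:ℝ) ρ, HasDerivWithinAt h (h' s) (Icc 0 ρ) s :=
      fun s hs => (hu_sol x s hs).sub (hv_sol x s hs)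
    have hbound : ∀ s ∈ Ico (0:ℝ) ρ, ‖h' s‖ ≤ (1 + c' * Cw) * D := by
      intro s hs
      have hsI : s ∈ Icc (0:ℝ) ρ := Ico_subset_Icc_self hs
      set A : (Fin m → ℝ) → ℝ := fun y => w x y * (1 + γ * g (u x s - u y s)) * f (u y s)
      set B : (Fin m → ℝ) → ℝ := fun y => w x y * (1 + γ * g (v x s - v y s)) * f (v y s)
      have hA : Integrable A := hInt u hu_meas x s
      have hB : Integrable B := hInt v hv_meas x s
      have hpt : ∀ y, |A y - B y| ≤ |w x y| * (c' * D) := by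
        intro y
        have hDu : |u y s - v y s| ≤ D := hD_ge y s hsI
        have hDx : |u x s - v x s| ≤ D := hD_ge x s hsI
        set a := u x s - u y s
        set a' := v x s - v y s
        set b := u y s
        set b' := v y s
        have hfl : |f b - f b'| ≤ L * D := by
          calc |f b - f b'| ≤ L * |b - b'| := hf_lip b b'
            _ ≤ L * D := by apply mul_le_mul_of_nonneg_left hDu hL
        have hgl : |g a - g a'| ≤ K * (2 * D) := by
          have haa : |a - a'| ≤ 2 * D := by
            have : a - a' = (u x s - v x s) - (u y s - v y s) := by ring
            rw [this]
            calc |(u x s - v x s) - (u y s - v y s)| ≤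
                |u x s - v x s| + |u y s - v y s| := abs_sub _ _
              _ ≤ 2 * D := by linarith
          calc |g a - g a'| ≤ K * |a - a'| := hg_lip a a'
            _ ≤ K * (2 * D) := mul_le_mul_of_nonneg_left haa hK
        have hga1 : |g a| ≤ 1 := by
          rw [abs_of_nonneg (hg_range a).1]; exact (hg_range a).2
        have hfb1 : |f b'| ≤ 1 := by
          rw [abs_of_nonneg (hf_range b').1]; exact (hf_range b').2
        have eAB : A y - B y = w x y * ((1 + γ * g a) * f b - (1 + γ * g a') * f b') := by
          simp only [A, B]; ring
        rw [eAB, abs_mul]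
        refine mul_le_mul_of_nonneg_left ?_ (abs_nonneg _)
        have e1 : (1 + γ * g a) * f b - (1 + γ * g a') * f b' =
            (f b - f b') + γ * (g a * (f b - f b') + (g a - g a') * f b') := by ring
        rw [e1]
        calc |(f b - f b') + γ * (g a * (f b - f b') + (g a - g a') * f b')|
            ≤ |f b - f b'| + γ * (|g a| * |f b - f b'| + |g a - g a'| * |f b'|) := by
              refine (abs_add_le _ _).trans ?_
              gcongr
              rw [abs_mul, abs_of_nonneg hγ]
              refine mul_le_mul_of_nonneg_left ?_ hγ
              refine (abs_add_le _ _).trans ?_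
              rw [abs_mul, abs_mul]
          _ ≤ L * D + γ * (1 * (L * D) + K * (2 * D) * 1) := by
              gcongr <;> first
                | exact hfl | exact hga1 | exact hgl | exact hfb1
                | positivity | exact abs_nonneg _
          _ = c' * D := by rw [hc'def]; ring
      have hIdiff : |(∫ y, A y) - ∫ y, B y| ≤ Cw * (c' * D) := by
        rw [← integral_sub hA hB]
        calc |∫ y, (A y - B y)| ≤ ∫ y, |A y - B y| := by
              simpa [Real.norm_eq_abs] using norm_integral_le_integral_norm (fun y => A y - B y)
          _ ≤ ∫ y, |w x y| * (c' * D) := by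
              refine integral_mono (hA.sub hB).abs ((hw_int x).abs.mul_const _) hpt
          _ = (∫ y, |w x y|) * (c' * D) := integral_mul_const _ _
          _ ≤ Cw * (c' * D) := mul_le_mul_of_nonneg_right (hw_L1 x) (by positivity)
      have e2 : h' s = -(u x s - v x s) + ((∫ y, A y) - ∫ y, B y) := by
        simp only [hh'def, A, B]; ring
      rw [Real.norm_eq_abs, e2]
      calc |-(u x s - v x s) + ((∫ y, A y) - ∫ y, B y)|
          ≤ |u x s - v x s| + |(∫ y, A y) - ∫ y, B y| := by
            refine (abs_add_le _ _).trans ?_; rw [abs_neg]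
        _ ≤ D + Cw * (c' * D) := add_le_add (hD_ge x s hsI) hIdiff
        _ = (1 + c' * Cw) * D := by ring
    have := norm_image_sub_le_of_norm_deriv_le_segment' hderiv hbound t ht
    rw [Real.norm_eq_abs] at this
    have hq' : (1 + c' * Cw) * D * (t - 0) ≤ q * D := by
      have h1 : 0 ≤ (1 + c' * Cw) * D := by positivity
      have h2 : t - 0 ≤ ρ := by linarith [ht.2]
      calc (1 + c' * Cw) * D * (t - 0) ≤ (1 + c' * Cw) * D * ρ :=
            mul_le_mul_of_nonneg_left h2 h1
        _ = q * D := by rw [hqdef, hc'def]; ring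
    have h0 : h 0 = u₀ x - v₀ x := by simp [hhdef, hu_init x, hv_init x]
    have hn : |h 0| ≤ ‖u₀ - v₀‖ := by
      rw [h0]
      have := BoundedContinuousFunction.norm_coe_le_norm (u₀ - v₀) x
      simpa [Real.norm_eq_abs] using this
    calc |u x t - v x t| = |h 0 + (h t - h 0)| := by simp [hhdef]
      _ ≤ |h 0| + |h t - h 0| := abs_add_le _ _
      _ ≤ ‖u₀ - v₀‖ + q * D := add_le_add hn (this.trans hq')
  have hD_le : D ≤ ‖u₀ - v₀‖ + q * D := by
    refine csSup_le hS_ne ?_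
    rintro d ⟨x, t, ht, rfl⟩
    exact key x t ht
  have h1q : 0 < 1 - q := by linarith
  have hDfin : D ≤ (1 / (1 - q)) * ‖u₀ - v₀‖ := by
    rw [div_mul_eq_mul_div, one_mul, le_div_iff₀ h1q]
    nlinarith
  intro x t ht
  exact (hD_ge x t ht).trans hDfin
end

section
/- Let w be a synaptic kernel with w(x,y) > 0 for all x, y ∈ ℝ^m, let f, g be an activation function and a learning modulation function, let γ > 0, and let u_0 ∈ C_b(ℝ^m) satisfy u_0(x) ≥ 0 for all x ∈ ℝ^m. If u is the solution of the initial value problem u_t(x,t) = −u(x,t) + ∫_{ℝ^m} w(x,y)[1 + γ g(u(x,t) − u(y,t))] f(u(y,t)) dy with u(x,0) = u_0(x), then u(x,t) ≥ 0 for all x ∈ ℝ^m and all t ≥ 0. -/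
open MeasureTheory Set

/-!
The integrating factor `eᵗ` turns `u_t ≥ -u` into `(eᵗ u)_t ≥ 0`. With a positive kernel
and `f, g, γ ≥ 0` the integral term of the field equation is nonnegative, so `u_t ≥ -u`
along every trajectory `t ↦ u(x,t)`, and `eᵗ u(x,t) ≥ u₀(x) ≥ 0`.
-/

section IntegratingFactor

variable {v v' : ℝ → ℝ} {a : ℝ}

theorem monotoneOn_exp_mul_of_neg_le_deriv
    (hv : ∀ t ∈ Ici a, HasDerivWithinAt v (v' t) (Ici a) t)
    (hle : ∀ t ∈ Ici a, -v t ≤ v' t) :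
    MonotoneOn (fun t => Real.exp t * v t) (Ici a) := by
  have hderiv : ∀ t ∈ Ici a, HasDerivWithinAt (fun t => Real.exp t * v t)
      (Real.exp t * (v t + v' t)) (Ici a) t := fun t ht =>
    (((Real.hasDerivAt_exp t).hasDerivWithinAt).mul (hv t ht)).congr_deriv (by ring)
  refine monotoneOn_of_hasDerivWithinAt_nonneg (convex_Ici a)
    (fun t ht => (hderiv t ht).continuousWithinAt)
    (fun t ht => (hderiv t (interior_subset ht)).mono interior_subset)
    (fun t ht => ?_)
  have := hle t (interior_subset ht)
  exact mul_nonneg (Real.exp_pos t).le (by linarith)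

theorem nonneg_of_neg_le_deriv
    (hv : ∀ t ∈ Ici a, HasDerivWithinAt v (v' t) (Ici a) t)
    (hle : ∀ t ∈ Ici a, -v t ≤ v' t) (h₀ : 0 ≤ v a) :
    ∀ t ∈ Ici a, 0 ≤ v t := by
  intro t ht
  have hmono : Real.exp a * v a ≤ Real.exp t * v t :=
    monotoneOn_exp_mul_of_neg_le_deriv hv hle self_mem_Ici ht ht
  have : 0 ≤ Real.exp t * v t := le_trans (by positivity) hmono
  exact nonneg_of_mul_nonneg_right (by linarith) (Real.exp_pos t)

end IntegratingFactor

theorem stmt_9_general {m : ℕ}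
    (w : (Fin m → ℝ) → (Fin m → ℝ) → ℝ)
    (hw_pos : ∀ x y, 0 < w x y)
    (f g : ℝ → ℝ)
    (hf_range : ∀ s, 0 ≤ f s ∧ f s ≤ 1)
    (hg_range : ∀ s, 0 ≤ g s ∧ g s ≤ 1)
    (γ : ℝ) (hγ : 0 < γ)
    (u₀ : BoundedContinuousFunction (Fin m → ℝ) ℝ)
    (hu₀_pos : ∀ x, 0 ≤ u₀ x)
    (u : (Fin m → ℝ) → ℝ → ℝ)
    (hu_init : ∀ x, u x 0 = u₀ x)
    (hu_sol : ∀ (x : Fin m → ℝ), ∀ t ∈ Ici (0:ℝ),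
      HasDerivWithinAt (u x)
        (-(u x t) + ∫ y, w x y * (1 + γ * g (u x t - u y t)) * f (u y t))
        (Ici 0) t) :
    ∀ (x : Fin m → ℝ), ∀ t ∈ Ici (0:ℝ), 0 ≤ u x t := by
  intro x
  have hsynaptic_nonneg : ∀ t, 0 ≤ ∫ y, w x y * (1 + γ * g (u x t - u y t)) * f (u y t) :=
    fun t => integral_nonneg fun y =>
      mul_nonneg (mul_nonneg (hw_pos x y).le
        (add_nonneg zero_le_one (mul_nonneg hγ.le (hg_range _).1))) (hf_range _).1
  exact nonneg_of_neg_le_deriv (hu_sol x)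
    (fun t _ => le_add_of_nonneg_right (hsynaptic_nonneg t)) (hu_init x ▸ hu₀_pos x)

/-- Positivity: if the synaptic kernel is strictly positive, `γ > 0`, and
the initial datum `u₀ ∈ C_b(ℝ^m)` is nonnegative, then the solution of the plastic
neural field IVP stays nonnegative: `u(x,t) ≥ 0` for all `x ∈ ℝ^m` and `t ≥ 0`. -/
theorem stmt_9 {m : ℕ} (hm : 1 ≤ m)
    (w : (Fin m → ℝ) → (Fin m → ℝ) → ℝ)
    (Cinf Cw Kw : ℝ) (hCw : 0 < Cw) (hKw : 0 < Kw)
    (hw_meas : Measurable (Function.uncurry w))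
    (hw_bdd : ∀ x y, |w x y| ≤ Cinf)
    (hw_int : ∀ x, Integrable fun y => w x y)
    (hw_L1 : ∀ x, (∫ y, |w x y|) ≤ Cw)
    (hw_lip : ∀ x x', (∫ y, |w x y - w x' y|) ≤ Kw * ‖x - x'‖)
    (hw_pos : ∀ x y, 0 < w x y)
    (f g : ℝ → ℝ)
    (hf_smooth : ContDiff ℝ 1 f) (hf_deriv : ∃ B, ∀ s, |deriv f s| ≤ B)
    (hf_range : ∀ s, 0 ≤ f s ∧ f s ≤ 1)
    (hg_smooth : ContDiff ℝ 1 g) (hg_deriv : ∃ B, ∀ s, |deriv g s| ≤ B)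
    (hg_range : ∀ s, 0 ≤ g s ∧ g s ≤ 1)
    (γ : ℝ) (hγ : 0 < γ)
    (u₀ : BoundedContinuousFunction (Fin m → ℝ) ℝ)
    (hu₀_pos : ∀ x, 0 ≤ u₀ x)
    (u : (Fin m → ℝ) → ℝ → ℝ)
    (hu_meas : Measurable (Function.uncurry u))
    (hu_init : ∀ x, u x 0 = u₀ x)
    (hu_sol : ∀ (x : Fin m → ℝ), ∀ t ∈ Ici (0:ℝ),
      HasDerivWithinAt (u x)
        (-(u x t) + ∫ y, w x y * (1 + γ * g (u x t - u y t)) * f (u y t))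
        (Ici 0) t) :
    ∀ (x : Fin m → ℝ), ∀ t ∈ Ici (0:ℝ), 0 ≤ u x t :=
  stmt_9_general w hw_pos f g hf_range hg_range γ hγ u₀ hu₀_pos u hu_init hu_sol
end

section
/- Let Ω ⊂ ℝ^m be compact, w a synaptic kernel, f an activation function, and g(δ) = exp(−δ²) the Gaussian learning kernel. Suppose u^γ ∈ C([0,∞); C_b(Ω)) is a global solution of u_t(x,t) = −u(x,t) + ∫_Ω w(x,y)[1 + γ g(u(x,t) − u(y,t))] f(u(y,t)) dy with continuous initial datum. Then for γ sufficiently small the family {u^γ(·,t)}_{t≥0} is equicontinuous in C(Ω), and consequently there exists a sequence of times t₁ < t₂ < …, t_n → ∞, such that u^γ(·,t_n) converges uniformly on Ω to some function u_∞ ∈ C(Ω). -/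
open MeasureTheory Set Filter
open scoped BoundedContinuousFunction

/-!
For `x, x' ∈ Ω` the difference `φ = u(x,·) - u(x',·)` solves `φ' = -φ + R` with
`|R| ≤ (1 + γ) ‖w(x,·) - w(x',·)‖₁ + γ C_w |φ|`, since the Gaussian `g` is 1-Lipschitz with
`|g| ≤ 1` and `0 ≤ f ≤ 1`. For `γ C_w < 1` this equation is dissipative, so for all `t ≥ 0`
`|φ(t)| ≤ max (|u₀ x - u₀ x'|, (1 + γ) K_w |x - x'| / (1 - γ C_w))`,
a modulus of continuity independent of `t`. The bounded, equicontinuous sequence `u(·, n)` then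
has a uniformly convergent subsequence by Arzelà–Ascoli.
-/

theorem lipschitzWith_one_exp_neg_sq : LipschitzWith 1 fun s : ℝ => Real.exp (-s ^ 2) := by
  refine lipschitzWith_of_nnnorm_deriv_le (by fun_prop) fun s => ?_
  have hderiv : deriv (fun s : ℝ => Real.exp (-s ^ 2)) s = -(2 * s) * Real.exp (-s ^ 2) := by
    rw [((hasDerivAt_pow 2 s).fun_neg.exp).deriv]
    norm_num
    ring
  have h2s : 2 * |s| ≤ Real.exp (s ^ 2) := by
    nlinarith [Real.add_one_le_exp (s ^ 2), sq_nonneg (|s| - 1), sq_abs s]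
  rw [← NNReal.coe_le_coe, coe_nnnorm, hderiv, Real.norm_eq_abs, abs_mul, abs_neg, abs_mul,
    abs_two, abs_of_pos (Real.exp_pos _), NNReal.coe_one]
  calc 2 * |s| * Real.exp (-s ^ 2) ≤ Real.exp (s ^ 2) * Real.exp (-s ^ 2) := by gcongr
    _ = 1 := by rw [← Real.exp_add, add_neg_cancel, Real.exp_zero]

theorem abs_le_max_of_hasDerivWithinAt_neg_add {φ R : ℝ → ℝ} {A c : ℝ} (hc : c < 1)
    (hφ : ∀ t ∈ Ici (0 : ℝ), HasDerivWithinAt φ (-φ t + R t) (Ici 0) t)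
    (hR : ∀ t ∈ Ici (0 : ℝ), |R t| ≤ A + c * |φ t|) {T : ℝ} (hT : 0 ≤ T) :
    |φ T| ≤ max |φ 0| (A / (1 - c)) := by
  set B := max |φ 0| (A / (1 - c))
  have hB : 0 ≤ B := (abs_nonneg _).trans (le_max_left _ _)
  have hAB : A ≤ (1 - c) * B := by
    rw [← div_le_iff₀' (by linarith)]
    exact le_max_right _ _
  -- `φ²` strictly decreases whenever `|φ| > B`, so it never crosses `B² + ε`.
  have hsq : ∀ ε > (0 : ℝ), φ T ^ 2 ≤ B ^ 2 + ε := by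
    intro ε hε
    refine image_le_of_deriv_right_lt_deriv_boundary (f := fun t => φ t ^ 2)
      (f' := fun t => 2 * φ t * (-φ t + R t)) (B' := fun _ => 0)
      ((HasDerivWithinAt.continuousOn hφ).mono Icc_subset_Ici_self |>.pow 2)
      (fun t ht => ?_) ?_ (fun _ => hasDerivAt_const _ _) (fun t ht hφt => ?_) ⟨hT, le_rfl⟩
    · refine (((hφ t ht.1).mono (Ici_subset_Ici.2 ht.1)).fun_pow 2).congr_deriv ?_
      push_cast
      ring
    · have := pow_le_pow_left₀ (abs_nonneg (φ 0)) (le_max_left _ (A / (1 - c))) 2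
      rw [sq_abs] at this
      linarith
    · have hBφ : B < |φ t| := by nlinarith [sq_abs (φ t), abs_nonneg (φ t)]
      have hA : A < (1 - c) * |φ t| := by nlinarith [mul_lt_mul_of_pos_left hBφ (sub_pos.2 hc)]
      have hφR : φ t * R t ≤ |φ t| * (A + c * |φ t|) :=
        (le_abs_self _).trans ((abs_mul _ _).trans_le
          (mul_le_mul_of_nonneg_left (hR t ht.1) (abs_nonneg _)))
      nlinarith [mul_lt_mul_of_pos_left hA (hB.trans_lt hBφ), sq_abs (φ t)]
  nlinarith [le_of_forall_pos_le_add hsq, sq_abs (φ T), abs_nonneg (φ T)]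

theorem equicontinuous_of_abs_sub_le_max {ι X : Type*} [PseudoMetricSpace X] {F : ι → X → ℝ}
    {g : X → ℝ} (hg : Continuous g) (C : ℝ)
    (hF : ∀ i x x', |F i x - F i x'| ≤ max |g x - g x'| (C * dist x x')) : Equicontinuous F := by
  intro x₀
  refine Metric.equicontinuousAt_of_continuity_modulus
    (fun x => max |g x₀ - g x| (C * dist x₀ x)) ?_ F (Eventually.of_forall fun x i => ?_)
  · have hcont : Continuous fun x => max |g x₀ - g x| (C * dist x₀ x) := by fun_prop
    simpa using hcont.tendsto x₀
  · rw [Real.dist_eq]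
    exact hF i x₀ x

theorem Equicontinuous.exists_strictMono_tendstoUniformly {X β : Type*} [TopologicalSpace X]
    [CompactSpace X] [MetricSpace β] {v : ℕ → X → β} (hv : Equicontinuous v) {K : Set β}
    (hK : IsCompact K) (hvK : ∀ n x, v n x ∈ K) :
    ∃ ψ : ℕ → ℕ, ∃ L : X → β, StrictMono ψ ∧ Continuous L ∧
      TendstoUniformly (fun n => v (ψ n)) L atTop := by
  let V : ℕ → X →ᵇ β := fun n => .mkOfCompact ⟨v n, hv.continuous n⟩
  have hV : IsCompact (closure (range V)) := by
    refine BoundedContinuousFunction.arzela_ascoli K hK _ (by rintro _ x ⟨n, rfl⟩; exact hvK n x) ?_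
    refine fun x₀ U hU => (hv x₀ U hU).mono fun x hx => ?_
    rintro ⟨_, n, rfl⟩
    exact hx n
  obtain ⟨L, -, ψ, hψ, hL⟩ := hV.tendsto_subseq fun n => subset_closure (mem_range_self n)
  exact ⟨ψ, L, hψ, L.continuous, BoundedContinuousFunction.tendsto_iff_tendstoUniformly.1 hL⟩

namespace PlasticNeuralField

/-- The nonlocal term of the plastic neural field equation `u_t = -u + drive μ w g f γ u`;
the paper's case is `μ = volume.restrict Ω`, `g δ = exp (-δ²)`. -/
noncomputable def drive {α : Type*} [MeasurableSpace α] (μ : Measure α) (w : α → α → ℝ)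
    (g f : ℝ → ℝ) (γ : ℝ) (v : α → ℝ) (x : α) : ℝ :=
  ∫ y, w x y * (1 + γ * g (v x - v y)) * f (v y) ∂μ

variable {α : Type*} [MeasurableSpace α] {μ : Measure α} {w : α → α → ℝ} {g f : ℝ → ℝ} {γ : ℝ}

theorem abs_integrand_sub_le (hγ : 0 ≤ γ) (hg : ∀ s, |g s| ≤ 1) (hg_lip : LipschitzWith 1 g)
    {a a' p p' q b : ℝ} (hb : |b| ≤ 1) :
    |a * (1 + γ * g (p - q)) * b - a' * (1 + γ * g (p' - q)) * b|
      ≤ (1 + γ) * |a - a'| + γ * |p - p'| * |a'| := by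
  have hgain : |1 + γ * g (p - q)| ≤ 1 + γ := by
    refine (abs_add_le _ _).trans ?_
    rw [abs_one, abs_mul, abs_of_nonneg hγ]
    nlinarith [hg (p - q)]
  have hlip : |g (p - q) - g (p' - q)| ≤ |p - p'| := by
    simpa [Real.dist_eq] using hg_lip.dist_le_mul (p - q) (p' - q)
  calc |a * (1 + γ * g (p - q)) * b - a' * (1 + γ * g (p' - q)) * b|
      = |(a - a') * ((1 + γ * g (p - q)) * b) + a' * (γ * (g (p - q) - g (p' - q)) * b)| := by
        ring_nf
    _ ≤ |a - a'| * (|1 + γ * g (p - q)| * |b|) + |a'| * (γ * |g (p - q) - g (p' - q)| * |b|) := by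
        refine (abs_add_le _ _).trans_eq ?_
        simp only [abs_mul, abs_of_nonneg hγ]
    _ ≤ |a - a'| * ((1 + γ) * 1) + |a'| * (γ * |p - p'| * 1) := by gcongr
    _ = (1 + γ) * |a - a'| + γ * |p - p'| * |a'| := by ring

theorem integrable_integrand (hg : ∀ s, |g s| ≤ 1) (hg_lip : LipschitzWith 1 g)
    (hf : Measurable f) (hf_le : ∀ s, |f s| ≤ 1) {v : α → ℝ} (hv : Measurable v) {x : α}
    (hw : Integrable (w x) μ) :
    Integrable (fun y => w x y * (1 + γ * g (v x - v y)) * f (v y)) μ := by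
  simp_rw [mul_assoc]
  refine hw.mul_bdd (c := 1 + |γ|) ?_ (ae_of_all _ fun y => ?_)
  · have := hg_lip.continuous.measurable
    fun_prop
  · rw [norm_mul, Real.norm_eq_abs, Real.norm_eq_abs]
    have hgain : |1 + γ * g (v x - v y)| ≤ 1 + |γ| := by
      refine (abs_add_le _ _).trans ?_
      rw [abs_one, abs_mul]
      nlinarith [hg (v x - v y), abs_nonneg γ]
    nlinarith [hf_le (v y), abs_nonneg (f (v y)), abs_nonneg (1 + γ * g (v x - v y))]

theorem abs_drive_sub_drive_le (hγ : 0 ≤ γ) (hg : ∀ s, |g s| ≤ 1) (hg_lip : LipschitzWith 1 g)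
    (hf : Measurable f) (hf_le : ∀ s, |f s| ≤ 1) {v : α → ℝ} (hv : Measurable v) {x x' : α}
    (hw : Integrable (w x) μ) (hw' : Integrable (w x') μ) :
    |drive μ w g f γ v x - drive μ w g f γ v x'|
      ≤ (1 + γ) * ∫ y, |w x y - w x' y| ∂μ + γ * |v x - v x'| * ∫ y, |w x' y| ∂μ := by
  have hdiff : Integrable (fun y => |w x y - w x' y|) μ := (hw.sub hw').abs
  rw [drive, drive, ← integral_sub (integrable_integrand hg hg_lip hf hf_le hv hw)
    (integrable_integrand hg hg_lip hf hf_le hv hw'), ← integral_const_mul,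
    ← integral_const_mul, ← integral_add (hdiff.const_mul _) (hw'.abs.const_mul _),
    ← Real.norm_eq_abs]
  refine norm_integral_le_of_norm_le ((hdiff.const_mul _).add (hw'.abs.const_mul _))
    (ae_of_all _ fun y => ?_)
  simpa only [Pi.add_apply, Real.norm_eq_abs] using abs_integrand_sub_le hγ hg hg_lip (hf_le _)

theorem abs_sub_le_of_hasDerivWithinAt (hγ : 0 ≤ γ) (hg : ∀ s, |g s| ≤ 1)
    (hg_lip : LipschitzWith 1 g) (hf : Measurable f) (hf_le : ∀ s, |f s| ≤ 1) {u : α → ℝ → ℝ}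
    (hu : ∀ t, Measurable fun y => u y t) {x x' : α} (hw : Integrable (w x) μ)
    (hw' : Integrable (w x') μ) {C D : ℝ} (hC : ∫ y, |w x' y| ∂μ ≤ C)
    (hD : ∫ y, |w x y - w x' y| ∂μ ≤ D) (hγC : γ * C < 1)
    (hux : ∀ t ∈ Ici (0 : ℝ),
      HasDerivWithinAt (u x) (-u x t + drive μ w g f γ (fun y => u y t) x) (Ici 0) t)
    (hux' : ∀ t ∈ Ici (0 : ℝ),
      HasDerivWithinAt (u x') (-u x' t + drive μ w g f γ (fun y => u y t) x') (Ici 0) t)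
    {t : ℝ} (ht : 0 ≤ t) :
    |u x t - u x' t| ≤ max |u x 0 - u x' 0| ((1 + γ) * D / (1 - γ * C)) := by
  refine abs_le_max_of_hasDerivWithinAt_neg_add hγC (φ := fun t => u x t - u x' t)
    (R := fun t => drive μ w g f γ (fun y => u y t) x - drive μ w g f γ (fun y => u y t) x')
    (fun t ht => ((hux t ht).fun_sub (hux' t ht)).congr_deriv (by ring)) (fun t _ => ?_) ht
  have hdrive := abs_drive_sub_drive_le hγ hg hg_lip hf hf_le (hu t) hw hw'
  have hDγ : (1 + γ) * ∫ y, |w x y - w x' y| ∂μ ≤ (1 + γ) * D := by gcongr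
  have hCγ : γ * |u x t - u x' t| * ∫ y, |w x' y| ∂μ ≤ γ * |u x t - u x' t| * C := by gcongr
  linarith

end PlasticNeuralField

theorem stmt_16_general {m : ℕ}
    (Ω : Set (Fin m → ℝ)) (hΩ_cpt : IsCompact Ω)
    (w : (Fin m → ℝ) → (Fin m → ℝ) → ℝ)
    (Cw Kw : ℝ) (hCw : 0 < Cw)
    (hw_int : ∀ x, Integrable fun y => w x y)
    (hw_L1 : ∀ x, (∫ y, |w x y|) ≤ Cw)
    (hw_lip : ∀ x x', (∫ y, |w x y - w x' y|) ≤ Kw * ‖x - x'‖)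
    (f : ℝ → ℝ)
    (hf_smooth : ContDiff ℝ 1 f)
    (hf_range : ∀ s, 0 ≤ f s ∧ f s ≤ 1) :
    ∃ γ₀ > (0:ℝ), ∀ γ, 0 ≤ γ → γ < γ₀ →
      ∀ (u₀ : (Fin m → ℝ) → ℝ) (u : (Fin m → ℝ) → ℝ → ℝ),
        ContinuousOn u₀ Ω →
        Measurable (Function.uncurry u) →
        ContinuousOn (fun p : (Fin m → ℝ) × ℝ => u p.1 p.2) (Ω ×ˢ Ici 0) →
        (∃ M, ∀ x ∈ Ω, ∀ t ∈ Ici (0:ℝ), |u x t| ≤ M) →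
        (∀ x ∈ Ω, u x 0 = u₀ x) →
        (∀ x ∈ Ω, ∀ t ∈ Ici (0:ℝ),
          HasDerivWithinAt (u x)
            (-(u x t) + ∫ y in Ω,
              w x y * (1 + γ * Real.exp (-(u x t - u y t) ^ 2)) * f (u y t))
            (Ici 0) t) →
        Equicontinuous (fun t : Ici (0:ℝ) => fun x : Ω => u x.1 t.1) ∧
        ∃ (ts : ℕ → ℝ) (uInf : Ω → ℝ),
          StrictMono ts ∧ (∀ n, 0 ≤ ts n) ∧
          Tendsto ts atTop atTop ∧
          Continuous uInf ∧
          TendstoUniformly (fun n => fun x : Ω => u x.1 (ts n)) uInf atTop := by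
  refine ⟨1 / Cw, one_div_pos.2 hCw, fun γ hγ hγCw u₀ u hu₀ hu_meas _ hu_bdd hu_init hu_ode => ?_⟩
  have hγC : γ * Cw < 1 := by rwa [lt_div_iff₀ hCw] at hγCw
  have hg_le : ∀ s : ℝ, |Real.exp (-s ^ 2)| ≤ 1 := fun s => by
    rw [abs_of_pos (Real.exp_pos _), Real.exp_le_one_iff, neg_nonpos]
    exact sq_nonneg s
  have hf_le : ∀ s, |f s| ≤ 1 := fun s => abs_le.2 ⟨by linarith [(hf_range s).1], (hf_range s).2⟩
  have hrestrict : ∀ h : (Fin m → ℝ) → ℝ, Integrable h → ∫ y in Ω, |h y| ≤ ∫ y, |h y| :=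
    fun h hh => setIntegral_le_integral hh.abs (ae_of_all _ fun _ => abs_nonneg _)
  have hL1 : ∀ x, ∫ y in Ω, |w x y| ≤ Cw := fun x => (hrestrict _ (hw_int x)).trans (hw_L1 x)
  have hLip : ∀ x x', ∫ y in Ω, |w x y - w x' y| ≤ Kw * ‖x - x'‖ := fun x x' =>
    (hrestrict _ ((hw_int x).sub (hw_int x'))).trans (hw_lip x x')
  have hmod : ∀ (t : Ici (0 : ℝ)) (x x' : Ω), |u x t - u x' t|
      ≤ max |u₀ x - u₀ x'| ((1 + γ) * Kw / (1 - γ * Cw) * dist x x') := by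
    rintro ⟨t, ht⟩ ⟨x, hx⟩ ⟨x', hx'⟩
    have h := PlasticNeuralField.abs_sub_le_of_hasDerivWithinAt (u := u) hγ hg_le
      lipschitzWith_one_exp_neg_sq hf_smooth.continuous.measurable hf_le
      (fun t => hu_meas.comp measurable_prodMk_right) (hw_int x).restrict (hw_int x').restrict
      (hL1 x') (hLip x x') hγC (hu_ode x hx) (hu_ode x' hx') ht
    rw [hu_init x hx, hu_init x' hx'] at h
    refine h.trans_eq (congrArg _ ?_)
    rw [Subtype.dist_eq, dist_eq_norm]
    ring
  have hequi := equicontinuous_of_abs_sub_le_max (g := fun x : Ω => u₀ x) hu₀.domRestrict _ hmod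
  refine ⟨hequi, ?_⟩
  obtain ⟨M, hM⟩ := hu_bdd
  have : CompactSpace Ω := isCompact_iff_compactSpace.mp hΩ_cpt
  obtain ⟨ψ, uInf, hψ, huInf, hconv⟩ :=
    (hequi.comp fun n : ℕ => ⟨n, mem_Ici.2 n.cast_nonneg⟩).exists_strictMono_tendstoUniformly
      isCompact_Icc fun n x => abs_le.1 (hM x x.2 n (mem_Ici.2 n.cast_nonneg))
  exact ⟨fun n => ψ n, uInf, Nat.strictMono_cast.comp hψ, fun n => (ψ n).cast_nonneg,
    tendsto_natCast_atTop_atTop.comp hψ.tendsto_atTop, huInf, hconv⟩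

/-- Equicontinuity and convergence along a time sequence: let `Ω` be
compact, `w` a synaptic kernel, `f` an activation function, and `g(δ) = exp(-δ²)` the
Gaussian learning kernel.  For `γ` sufficiently small, any global solution
`u^γ ∈ C([0,∞); C_b(Ω))` of the plastic neural field equation with continuous initial
datum has `{u^γ(·,t)}_{t ≥ 0}` equicontinuous, and there are times `t₁ < t₂ < …`,
`t_n → ∞`, with `u^γ(·,t_n)` converging uniformly on `Ω` to some `u_∞ ∈ C(Ω)`. -/
theorem stmt_16 {m : ℕ} (hm : 1 ≤ m)
    (Ω : Set (Fin m → ℝ)) (hΩ_cpt : IsCompact Ω) (hΩ_ne : Ω.Nonempty)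
    (w : (Fin m → ℝ) → (Fin m → ℝ) → ℝ)
    (Cinf Cw Kw : ℝ) (hCw : 0 < Cw) (hKw : 0 < Kw)
    (hw_meas : Measurable (Function.uncurry w))
    (hw_bdd : ∀ x y, |w x y| ≤ Cinf)
    (hw_int : ∀ x, Integrable fun y => w x y)
    (hw_L1 : ∀ x, (∫ y, |w x y|) ≤ Cw)
    (hw_lip : ∀ x x', (∫ y, |w x y - w x' y|) ≤ Kw * ‖x - x'‖)
    (f : ℝ → ℝ)
    (hf_smooth : ContDiff ℝ 1 f) (hf_deriv : ∃ B, ∀ s, |deriv f s| ≤ B)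
    (hf_range : ∀ s, 0 ≤ f s ∧ f s ≤ 1) :
    ∃ γ₀ > (0:ℝ), ∀ γ, 0 ≤ γ → γ < γ₀ →
      ∀ (u₀ : (Fin m → ℝ) → ℝ) (u : (Fin m → ℝ) → ℝ → ℝ),
        ContinuousOn u₀ Ω →
        Measurable (Function.uncurry u) →
        ContinuousOn (fun p : (Fin m → ℝ) × ℝ => u p.1 p.2) (Ω ×ˢ Ici 0) →
        (∃ M, ∀ x ∈ Ω, ∀ t ∈ Ici (0:ℝ), |u x t| ≤ M) →
        (∀ x ∈ Ω, u x 0 = u₀ x) →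
        (∀ x ∈ Ω, ∀ t ∈ Ici (0:ℝ),
          HasDerivWithinAt (u x)
            (-(u x t) + ∫ y in Ω,
              w x y * (1 + γ * Real.exp (-(u x t - u y t) ^ 2)) * f (u y t))
            (Ici 0) t) →
        Equicontinuous (fun t : Ici (0:ℝ) => fun x : Ω => u x.1 t.1) ∧
        ∃ (ts : ℕ → ℝ) (uInf : Ω → ℝ),
          StrictMono ts ∧ (∀ n, 0 ≤ ts n) ∧
          Tendsto ts atTop atTop ∧
          Continuous uInf ∧
          TendstoUniformly (fun n => fun x : Ω => u x.1 (ts n)) uInf atTop :=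
  stmt_16_general Ω hΩ_cpt w Cw Kw hCw hw_int hw_L1 hw_lip f hf_smooth hf_range
end

section
/- Let λ > 0, k ∈ ℝ, and let V : ℝ → ℝ be continuous, and set P(y) = k² − V(y). Suppose u : ℝ → ℝ is a twice continuously differentiable integrable function satisfying the stationary gain field equation u(x) = (1/(2λ)) ∫_ℝ e^{−λ|x−y|} P(y) u(y) dy for all x ∈ ℝ (with the integral absolutely convergent). Then u satisfies the time-independent Schrödinger equation −u''(x) + V(x) u(x) = E u(x) for all x ∈ ℝ, where E = k² − λ². -/
/-!
Splitting the integral at `y = x` writes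
`w(x) = ∫ e^{-λ|x-y|} g(y) dy = e^{-λx} F(x) + e^{λx} G(x)` with
`F(x) = ∫_{y ≤ x} e^{λy} g(y) dy` and `G(x) = ∫_{y ≥ x} e^{-λy} g(y) dy`.
Since `F' = e^{λx} g` and `G' = -e^{-λx} g`, differentiating twice (the `g`-terms cancel in `w'`)
gives `w'' = λ² w - 2λ g`, i.e. `e^{-λ|x|}/(2λ)` is the Green's function of `λ² - d²/dx²`.
With `g = (k² - V) u` and `u = w / (2λ)` this is `-u'' + V u = (k² - λ²) u`.
-/

open MeasureTheory Real Set

section IntegralOfHalfLine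

variable {E : Type*} [NormedAddCommGroup E] [NormedSpace ℝ E] [CompleteSpace E] {f : ℝ → E}

theorem hasDerivAt_integral_Iic (hf : Continuous f) (hint : ∀ a, IntegrableOn f (Iic a))
    (x : ℝ) : HasDerivAt (fun t => ∫ y in Iic t, f y) (f x) x := by
  have hsplit :
      (fun t => ∫ y in Iic t, f y) = fun t => (∫ y in Iic 0, f y) + ∫ y in 0..t, f y :=
    funext fun t => by rw [← intervalIntegral.integral_Iic_sub_Iic (hint 0) (hint t)]; abel
  rw [hsplit]
  exact (intervalIntegral.integral_hasDerivAt_right (hf.intervalIntegrable 0 x)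
    (hf.stronglyMeasurableAtFilter _ _) hf.continuousAt).const_add _

theorem hasDerivAt_integral_Ici (hf : Continuous f) (hint : ∀ a, IntegrableOn f (Ici a))
    (x : ℝ) : HasDerivAt (fun t => ∫ y in Ici t, f y) (-f x) x := by
  have hsplit :
      (fun t => ∫ y in Ici t, f y) = fun t => (∫ y in Ici 0, f y) - ∫ y in 0..t, f y :=
    funext fun t => by rw [← intervalIntegral.integral_Ici_sub_Ici' (hint 0) (hint t)]; abel
  rw [hsplit]
  exact (intervalIntegral.integral_hasDerivAt_right (hf.intervalIntegrable 0 x)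
    (hf.stronglyMeasurableAtFilter _ _) hf.continuousAt).const_sub _

end IntegralOfHalfLine

section ExpKernel

variable {lam x y : ℝ} {g : ℝ → ℝ}

theorem exp_neg_mul_abs_sub_of_le (h : y ≤ x) :
    exp (-lam * |x - y|) = exp (-lam * x) * exp (lam * y) := by
  rw [abs_of_nonneg (sub_nonneg.2 h), ← exp_add]
  ring_nf

theorem exp_neg_mul_abs_sub_of_ge (h : x ≤ y) :
    exp (-lam * |x - y|) = exp (lam * x) * exp (-lam * y) := by
  rw [abs_sub_comm, abs_of_nonneg (sub_nonneg.2 h), ← exp_add]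
  ring_nf

theorem integrableOn_Iic_exp_mul (hint : Integrable fun y => exp (-lam * |x - y|) * g y) :
    IntegrableOn (fun y => exp (lam * y) * g y) (Iic x) := by
  refine IntegrableOn.congr_fun (hint.integrableOn.const_mul (exp (lam * x))) (fun y hy => ?_)
    measurableSet_Iic
  rw [exp_neg_mul_abs_sub_of_le hy, ← mul_assoc, ← mul_assoc, ← exp_add]
  simp only [neg_mul, add_neg_cancel, exp_zero, one_mul]

theorem integrableOn_Ici_exp_neg_mul (hint : Integrable fun y => exp (-lam * |x - y|) * g y) :
    IntegrableOn (fun y => exp (-lam * y) * g y) (Ici x) := by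
  refine IntegrableOn.congr_fun (hint.integrableOn.const_mul (exp (-lam * x))) (fun y hy => ?_)
    measurableSet_Ici
  rw [exp_neg_mul_abs_sub_of_ge hy, ← mul_assoc, ← mul_assoc, ← exp_add]
  simp only [neg_mul, neg_add_cancel, exp_zero, one_mul]

theorem integral_exp_neg_mul_abs_sub_mul (hint : Integrable fun y => exp (-lam * |x - y|) * g y) :
    ∫ y, exp (-lam * |x - y|) * g y =
      exp (-lam * x) * (∫ y in Iic x, exp (lam * y) * g y) +
        exp (lam * x) * ∫ y in Ici x, exp (-lam * y) * g y := by
  rw [← intervalIntegral.integral_Iio_add_Ici hint.integrableOn hint.integrableOn,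
    ← integral_Iic_eq_integral_Iio, ← integral_const_mul, ← integral_const_mul]
  congr 1
  · refine setIntegral_congr_fun measurableSet_Iic fun y hy => ?_
    rw [exp_neg_mul_abs_sub_of_le hy]
    ring
  · refine setIntegral_congr_fun measurableSet_Ici fun y hy => ?_
    rw [exp_neg_mul_abs_sub_of_ge hy]
    ring

theorem hasDerivAt_exp_neg_mul_mul_add_exp_mul_mul {F G : ℝ → ℝ}
    (hF : HasDerivAt F (exp (lam * x) * g x) x) (hG : HasDerivAt G (-(exp (-lam * x) * g x)) x) :
    HasDerivAt (fun t => exp (-lam * t) * F t + exp (lam * t) * G t)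
      (-lam * exp (-lam * x) * F x + lam * exp (lam * x) * G x) x := by
  have h := (((hasDerivAt_id' x).const_mul (-lam)).exp.mul hF).add
    (((hasDerivAt_id' x).const_mul lam).exp.mul hG)
  refine h.congr_deriv ?_
  ring

theorem hasDerivAt_neg_mul_exp_neg_mul_mul_add_mul_exp_mul_mul {F G : ℝ → ℝ}
    (hF : HasDerivAt F (exp (lam * x) * g x) x) (hG : HasDerivAt G (-(exp (-lam * x) * g x)) x) :
    HasDerivAt (fun t => -lam * exp (-lam * t) * F t + lam * exp (lam * t) * G t)
      (lam ^ 2 * (exp (-lam * x) * F x + exp (lam * x) * G x) - 2 * lam * g x) x := by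
  have h := ((((hasDerivAt_id' x).const_mul (-lam)).exp.const_mul (-lam)).mul hF).add
    ((((hasDerivAt_id' x).const_mul lam).exp.const_mul lam).mul hG)
  have hexp : exp (-lam * x) * exp (lam * x) = 1 := by rw [← exp_add]; simp
  refine h.congr_deriv ?_
  linear_combination -2 * lam * g x * hexp

theorem deriv_deriv_integral_exp_neg_mul_abs_sub_mul (hg : Continuous g)
    (hint : ∀ x, Integrable fun y => exp (-lam * |x - y|) * g y) (x : ℝ) :
    deriv (deriv fun x => ∫ y, exp (-lam * |x - y|) * g y) x =
      lam ^ 2 * (∫ y, exp (-lam * |x - y|) * g y) - 2 * lam * g x := by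
  set F := fun x => ∫ y in Iic x, exp (lam * y) * g y
  set G := fun x => ∫ y in Ici x, exp (-lam * y) * g y
  have hF : ∀ x, HasDerivAt F (exp (lam * x) * g x) x :=
    hasDerivAt_integral_Iic (by fun_prop) fun a => integrableOn_Iic_exp_mul (hint a)
  have hG : ∀ x, HasDerivAt G (-(exp (-lam * x) * g x)) x :=
    hasDerivAt_integral_Ici (by fun_prop) fun a => integrableOn_Ici_exp_neg_mul (hint a)
  have hsplit : (fun x => ∫ y, exp (-lam * |x - y|) * g y) =
      fun x => exp (-lam * x) * F x + exp (lam * x) * G x :=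
    funext fun x => integral_exp_neg_mul_abs_sub_mul (hint x)
  have hderiv : deriv (fun x => exp (-lam * x) * F x + exp (lam * x) * G x) =
      fun x => -lam * exp (-lam * x) * F x + lam * exp (lam * x) * G x :=
    funext fun x => (hasDerivAt_exp_neg_mul_mul_add_exp_mul_mul (hF x) (hG x)).deriv
  rw [hsplit, hderiv,
    (hasDerivAt_neg_mul_exp_neg_mul_mul_add_mul_exp_mul_mul (hF x) (hG x)).deriv,
    integral_exp_neg_mul_abs_sub_mul (hint x)]

end ExpKernel

theorem stmt_19_general (lam : ℝ) (hlam : 0 < lam) (k : ℝ)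
    (V : ℝ → ℝ) (hV : Continuous V)
    (u : ℝ → ℝ) (hu : ContDiff ℝ 2 u)
    (hint : ∀ x : ℝ,
      Integrable fun y : ℝ => Real.exp (-lam * |x - y|) * ((k ^ 2 - V y) * u y))
    (heq : ∀ x : ℝ,
      u x = (1 / (2 * lam)) *
        ∫ y : ℝ, Real.exp (-lam * |x - y|) * ((k ^ 2 - V y) * u y)) :
    ∀ x : ℝ, -(deriv (deriv u) x) + V x * u x = (k ^ 2 - lam ^ 2) * u x := by
  intro x
  set w := fun x => ∫ y, exp (-lam * |x - y|) * ((k ^ 2 - V y) * u y) with hw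
  have hu_w : u = fun x => 1 / (2 * lam) * w x := funext heq
  have hu'' : deriv (deriv u) x = 1 / (2 * lam) * deriv (deriv w) x := by
    rw [hu_w, deriv_const_mul_field', deriv_const_mul_field']
  rw [hu'', hw, deriv_deriv_integral_exp_neg_mul_abs_sub_mul (by fun_prop) hint x, heq x]
  field_simp
  ring

/-- From the stationary gain field equation to the Schrödinger equation:
if `λ > 0`, `V` is continuous, `P(y) = k² - V(y)`, and a twice continuously
differentiable integrable `u : ℝ → ℝ` satisfies
`u(x) = (1/(2λ)) ∫ e^{-λ|x-y|} P(y) u(y) dy` for all `x` (with absolutely convergent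
integral), then `-u''(x) + V(x) u(x) = E u(x)` for all `x`, where `E = k² - λ²`. -/
theorem stmt_19 (lam : ℝ) (hlam : 0 < lam) (k : ℝ)
    (V : ℝ → ℝ) (hV : Continuous V)
    (u : ℝ → ℝ) (hu : ContDiff ℝ 2 u) (hu_int : Integrable u)
    (hint : ∀ x : ℝ,
      Integrable fun y : ℝ => Real.exp (-lam * |x - y|) * ((k ^ 2 - V y) * u y))
    (heq : ∀ x : ℝ,
      u x = (1 / (2 * lam)) *
        ∫ y : ℝ, Real.exp (-lam * |x - y|) * ((k ^ 2 - V y) * u y)) :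
    ∀ x : ℝ, -(deriv (deriv u) x) + V x * u x = (k ^ 2 - lam ^ 2) * u x :=
  stmt_19_general lam hlam k V hV u hu hint heq
end
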